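/- arXiv:math/0505462 — 7 statements merged into one kernel-verified Lean document; each statement's English description precedes it below -/
import Mathlib

section
/- Suppose 0 < R < 2. If a configuration x = (C, J_1, …, J_n) ∈ M_n(R) has its j-th and k-th arms both stretched out (i.e. |C − B_j| = 2 and |C − B_k| = 2) with j ≠ k, then the two arms are adjacent: j − k ≡ ±1 (mod n). -/
/-- Euclidean norm of a vector in ℝ². -/
noncomputable def enorm2 (v : ℝ × ℝ) : ℝ := Real.sqrt (v.1 ^ 2 + v.2 ^ 2)

/-- The k-th fixed endpoint `B_k = (R cos(2kπ/n), R sin(2kπ/n))` (indices from 0). -/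
noncomputable def Bpt (n : ℕ) (R : ℝ) (k : Fin n) : ℝ × ℝ :=
  (R * Real.cos (2 * (k.val : ℝ) * Real.pi / (n : ℝ)),
   R * Real.sin (2 * (k.val : ℝ) * Real.pi / (n : ℝ)))

/-- The configuration space `M_n(R)` of spiders with `n` arms of radius `R`,
as a subset of `(ℝ²)^{n+1} ≅ ℝ^{2n+2}`: a pair `(C, J)` with
`|C − J_k| = 1` and `|J_k − B_k| = 1` for all `k`. -/
noncomputable def MSpace (n : ℕ) (R : ℝ) : Set ((ℝ × ℝ) × (Fin n → ℝ × ℝ)) :=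
  {x | ∀ k : Fin n, enorm2 (x.1 - x.2 k) = 1 ∧ enorm2 (x.2 k - Bpt n R k) = 1}

/-- `d_n`, the maximum distance between `n`-th roots of unity. -/
noncomputable def dmax (n : ℕ) : ℝ :=
  if Even n then 2
  else Real.sqrt (2 - 2 * Real.cos (2 * ((n / 2 : ℕ) : ℝ) * Real.pi / (n : ℝ)))

/-- The critical radius `R_n = 2 / d_n`. -/
noncomputable def Rcrit (n : ℕ) : ℝ := 2 / dmax n

/-!
Write `−C = ρ (cos ψ, sin ψ)`. By the law of cosines
`|C − B_m|² = ρ² + R² + 2ρR cos(2πm/n − ψ)`, and `|C − B_m| ≤ 2` by the triangle inequality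
through `J_m`. Since `R < 2` forces `ρ > 0`, a stretched arm `m` maximises `cos(2πm/n − ψ)`.
Some root of unity lies within `π/n` of the direction `ψ`, so every maximiser does too; two
maximisers are then at most `2π/n` apart, i.e. adjacent.
-/

open Real

lemma enorm2_eq_norm (v : ℝ × ℝ) : enorm2 v = ‖Complex.equivRealProdLm.symm v‖ := by
  simp [enorm2, Complex.norm_eq_sqrt_sq_add_sq]

lemma enorm2_add_le (u v : ℝ × ℝ) : enorm2 (u + v) ≤ enorm2 u + enorm2 v := by
  simpa only [enorm2_eq_norm, map_add] using norm_add_le _ _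

lemma exists_eq_enorm2_mul_cos_sin (v : ℝ × ℝ) :
    ∃ ψ : ℝ, v = (enorm2 v * cos ψ, enorm2 v * sin ψ) := by
  refine ⟨Complex.arg (Complex.equivRealProdLm.symm v), ?_⟩
  rw [enorm2_eq_norm, Complex.norm_mul_cos_arg, Complex.norm_mul_sin_arg]
  rfl

lemma enorm2_polar_sub_polar_sq (ρ r ψ θ : ℝ) :
    enorm2 ((ρ * cos ψ, ρ * sin ψ) - (r * cos θ, r * sin θ)) ^ 2
      = ρ ^ 2 + r ^ 2 - 2 * ρ * r * cos (θ - ψ) := by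
  rw [enorm2, sq_sqrt (by positivity), cos_sub]
  simp only [Prod.fst_sub, Prod.snd_sub]
  linear_combination (ρ ^ 2) * sin_sq_add_cos_sq ψ + r ^ 2 * sin_sq_add_cos_sq θ

lemma enorm2_sub_Bpt_le_two {n : ℕ} {R : ℝ} {x : (ℝ × ℝ) × (Fin n → ℝ × ℝ)}
    (hx : x ∈ MSpace n R) (m : Fin n) : enorm2 (x.1 - Bpt n R m) ≤ 2 := by
  obtain ⟨hC, hB⟩ := hx m
  calc enorm2 (x.1 - Bpt n R m)
      = enorm2 ((x.1 - x.2 m) + (x.2 m - Bpt n R m)) := by rw [sub_add_sub_cancel]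
    _ ≤ 2 := by linarith [enorm2_add_le (x.1 - x.2 m) (x.2 m - Bpt n R m)]

lemma exists_int_abs_sub_mul_le {s : ℝ} (hs : 0 < s) (x : ℝ) :
    ∃ z : ℤ, |x - z * s| ≤ s / 2 := by
  refine ⟨round (x / s), ?_⟩
  have h := abs_sub_round (x / s)
  calc |x - round (x / s) * s| = |x / s - round (x / s)| * s := by
        rw [← abs_of_pos hs, ← abs_mul, abs_of_pos hs, sub_mul, div_mul_cancel₀ _ hs.ne']
    _ ≤ s / 2 := by nlinarith

lemma exists_int_abs_sub_le_of_cos_le {x δ : ℝ} (hδ : 0 ≤ δ) (h : cos δ ≤ cos x) :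
    ∃ z : ℤ, |x - z * (2 * π)| ≤ δ := by
  obtain ⟨z, hz⟩ := exists_int_abs_sub_mul_le (by positivity : 0 < 2 * π) x
  refine ⟨z, not_lt.mp fun hlt => ?_⟩
  have := cos_lt_cos_of_nonneg_of_le_pi hδ (by linarith) hlt
  rw [cos_abs, cos_sub_int_mul_two_pi] at this
  linarith

lemma exists_fin_cos_pi_div_le_cos_sub {n : ℕ} (hn : 0 < n) (ψ : ℝ) :
    ∃ m : Fin n, cos (π / n) ≤ cos (2 * (m : ℝ) * π / n - ψ) := by
  obtain ⟨z, hz⟩ := exists_int_abs_sub_mul_le (by positivity : 0 < 2 * π / n) ψ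
  have hz₀ : 0 ≤ z % n := Int.emod_nonneg _ (by omega)
  have hzn : z % n < n := Int.emod_lt_of_pos _ (by omega)
  refine ⟨⟨(z % n).toNat, by omega⟩, ?_⟩
  have hm : (((z % n).toNat : ℕ) : ℝ) = z - n * (z / n : ℤ) := by
    rw [← Int.cast_natCast, Int.toNat_of_nonneg hz₀, Int.emod_def]
    push_cast; ring
  have hangle : 2 * (((z % n).toNat : ℕ) : ℝ) * π / n - ψ
      = -(ψ - z * (2 * π / n)) - (z / n : ℤ) * (2 * π) := by
    rw [hm]; field_simp; ring
  rw [Fin.val_mk, hangle, cos_sub_int_mul_two_pi, cos_neg, ← cos_abs (ψ - _)]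
  apply cos_le_cos_of_nonneg_of_le_pi (by positivity)
  · have : π / n ≤ π := div_le_self pi_pos.le (by exact_mod_cast hn)
    linarith [show 2 * π / n / 2 = π / n by ring]
  · linarith [show 2 * π / n / 2 = π / n by ring]

lemma natCast_eq_add_one_or_sub_one_of_abs_sub_le {n : ℕ} {j k : Fin n} (hjk : j ≠ k)
    {z : ℤ} (h : |(j : ℤ) - k - n * z| ≤ 1) :
    ((j : ℕ) : ZMod n) = ((k : ℕ) : ZMod n) + 1 ∨
      ((j : ℕ) : ZMod n) = ((k : ℕ) : ZMod n) - 1 := by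
  set d := (j : ℤ) - k - n * z with hd
  have hjd : ((j : ℕ) : ZMod n) = ((k : ℕ) : ZMod n) + (d : ZMod n) := by
    rw [hd]; push_cast; rw [ZMod.natCast_self]; ring
  obtain ⟨h₁, h₂⟩ := abs_le.mp h
  obtain hd | hd | hd : d = -1 ∨ d = 0 ∨ d = 1 := by omega
  · right; rw [hjd, hd]; push_cast; ring
  · refine absurd (Fin.ext ?_) hjk
    rw [hd, Int.cast_zero, add_zero, ZMod.natCast_eq_natCast_iff'] at hjd
    simpa [Nat.mod_eq_of_lt j.isLt, Nat.mod_eq_of_lt k.isLt] using hjd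
  · left; rw [hjd, hd]; push_cast; ring

lemma natCast_eq_add_one_or_sub_one_of_forall_cos_le {n : ℕ} {j k : Fin n} (hjk : j ≠ k)
    {ψ : ℝ} (hj : ∀ m : Fin n, cos (2 * (m : ℝ) * π / n - ψ) ≤ cos (2 * (j : ℝ) * π / n - ψ))
    (hk : ∀ m : Fin n, cos (2 * (m : ℝ) * π / n - ψ) ≤ cos (2 * (k : ℝ) * π / n - ψ)) :
    ((j : ℕ) : ZMod n) = ((k : ℕ) : ZMod n) + 1 ∨
      ((j : ℕ) : ZMod n) = ((k : ℕ) : ZMod n) - 1 := by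
  have hn : (0 : ℝ) < n := by exact_mod_cast j.pos
  obtain ⟨m, hm⟩ := exists_fin_cos_pi_div_le_cos_sub j.pos ψ
  obtain ⟨z₁, hz₁⟩ := exists_int_abs_sub_le_of_cos_le (by positivity) (hm.trans (hj m))
  obtain ⟨z₂, hz₂⟩ := exists_int_abs_sub_le_of_cos_le (by positivity) (hm.trans (hk m))
  refine natCast_eq_add_one_or_sub_one_of_abs_sub_le hjk (z := z₁ - z₂) ?_
  have hdiff : 2 * π / n * ((j : ℝ) - k - n * (z₁ - z₂))
      = (2 * (j : ℝ) * π / n - ψ - z₁ * (2 * π)) - (2 * (k : ℝ) * π / n - ψ - z₂ * (2 * π)) := by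
    field_simp; ring
  have hstep : 0 < 2 * π / n := by positivity
  have hscaled : |2 * π / n * ((j : ℝ) - k - n * (z₁ - z₂))| ≤ 2 * π / n := by
    rw [hdiff]
    calc _ ≤ _ := abs_sub _ _
      _ ≤ π / n + π / n := add_le_add hz₁ hz₂
      _ = 2 * π / n := by ring
  rw [abs_mul, abs_of_pos hstep, mul_le_iff_le_one_right hstep] at hscaled
  exact_mod_cast hscaled

theorem stmt0_general (n : ℕ) (R : ℝ) (hR0 : 0 < R) (hR2 : R < 2)
    (x : (ℝ × ℝ) × (Fin n → ℝ × ℝ)) (hx : x ∈ MSpace n R)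
    (j k : Fin n) (hjk : j ≠ k)
    (hj : enorm2 (x.1 - Bpt n R j) = 2) (hk : enorm2 (x.1 - Bpt n R k) = 2) :
    ((j : ℕ) : ZMod n) = ((k : ℕ) : ZMod n) + 1 ∨
      ((j : ℕ) : ZMod n) = ((k : ℕ) : ZMod n) - 1 := by
  obtain ⟨ψ, hψ⟩ := exists_eq_enorm2_mul_cos_sin (-x.1)
  set ρ := enorm2 (-x.1)
  have hC : x.1 = ((-ρ) * cos ψ, (-ρ) * sin ψ) := by
    rw [← neg_neg x.1, hψ]; simp
  have hdist (m : Fin n) : enorm2 (x.1 - Bpt n R m) ^ 2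
      = ρ ^ 2 + R ^ 2 + 2 * ρ * R * cos (2 * (m : ℝ) * π / n - ψ) := by
    rw [hC, Bpt, enorm2_polar_sub_polar_sq]; ring
  have hρ : 0 < ρ := by
    have hρ₀ : 0 ≤ ρ := sqrt_nonneg _
    refine hρ₀.lt_of_ne fun h => ?_
    have := hdist j
    rw [hj, ← h] at this
    nlinarith
  have farthest (i : Fin n) (hi : enorm2 (x.1 - Bpt n R i) = 2) (m : Fin n) :
      cos (2 * (m : ℝ) * π / n - ψ) ≤ cos (2 * (i : ℝ) * π / n - ψ) := by
    have hm := enorm2_sub_Bpt_le_two hx m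
    have hm₀ : 0 ≤ enorm2 (x.1 - Bpt n R m) := sqrt_nonneg _
    have hρR : 0 < 2 * ρ * R := by positivity
    nlinarith [hdist m, hdist i]
  exact natCast_eq_add_one_or_sub_one_of_forall_cos_le hjk (farthest j hj) (farthest k hk)

/-- If `0 < R < 2` and a configuration in `M_n(R)` has its `j`-th and `k`-th arms
both stretched out (`|C − B_j| = |C − B_k| = 2`) with `j ≠ k`, then the two arms
are adjacent: `j − k ≡ ±1 (mod n)`. -/
theorem stmt0 (n : ℕ) (hn : 2 ≤ n) (R : ℝ) (hR0 : 0 < R) (hR2 : R < 2)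
    (x : (ℝ × ℝ) × (Fin n → ℝ × ℝ)) (hx : x ∈ MSpace n R)
    (j k : Fin n) (hjk : j ≠ k)
    (hj : enorm2 (x.1 - Bpt n R j) = 2) (hk : enorm2 (x.1 - Bpt n R k) = 2) :
    ((j : ℕ) : ZMod n) = ((k : ℕ) : ZMod n) + 1 ∨
      ((j : ℕ) : ZMod n) = ((k : ℕ) : ZMod n) - 1 :=
  stmt0_general n R hR0 hR2 x hx j k hjk hj hk
end

section
/- Suppose 0 < R < 2. No configuration x = (C, J_1, …, J_n) ∈ M_n(R) has three or more arms stretched out; that is, there do not exist three pairwise distinct indices i, j, k with |C − B_i| = |C − B_j| = |C − B_k| = 2. -/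
lemma three_on_circle (a b K u1 u2 v1 v2 w1 w2 : ℝ)
    (hab : a ^ 2 + b ^ 2 ≠ 0)
    (hu : u1 ^ 2 + u2 ^ 2 = 1) (hv : v1 ^ 2 + v2 ^ 2 = 1) (hw : w1 ^ 2 + w2 ^ 2 = 1)
    (lu : a * u1 + b * u2 = K) (lv : a * v1 + b * v2 = K) (lw : a * w1 + b * w2 = K)
    (huv : ¬ (u1 = v1 ∧ u2 = v2)) (huw : ¬ (u1 = w1 ∧ u2 = w2))
    (hvw : ¬ (v1 = w1 ∧ v2 = w2)) : False := by
  have hppos : 0 < (u1 - v1) ^ 2 + (u2 - v2) ^ 2 := by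
    rcases (not_and_or.mp huv) with h | h
    · have h0 : u1 - v1 ≠ 0 := sub_ne_zero.mpr h
      have h1 := lt_of_le_of_ne (sq_nonneg (u1 - v1)) (Ne.symm (pow_ne_zero 2 h0))
      have h2 := sq_nonneg (u2 - v2)
      linarith
    · have h0 : u2 - v2 ≠ 0 := sub_ne_zero.mpr h
      have h1 := lt_of_le_of_ne (sq_nonneg (u2 - v2)) (Ne.symm (pow_ne_zero 2 h0))
      have h2 := sq_nonneg (u1 - v1)
      linarith
  have hDa : ((u1 - v1) * (u2 - w2) - (u2 - v2) * (u1 - w1)) * a = 0 := by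
    linear_combination (u2 - w2) * lu - (u2 - w2) * lv - (u2 - v2) * lu + (u2 - v2) * lw
  have hDb : ((u1 - v1) * (u2 - w2) - (u2 - v2) * (u1 - w1)) * b = 0 := by
    linear_combination (w1 - u1) * lu - (w1 - u1) * lv - (v1 - u1) * lu + (v1 - u1) * lw
  have hD : (u1 - v1) * (u2 - w2) - (u2 - v2) * (u1 - w1) = 0 := by
    have h : ((u1 - v1) * (u2 - w2) - (u2 - v2) * (u1 - w1)) * (a ^ 2 + b ^ 2) = 0 := by
      linear_combination a * hDa + b * hDb
    exact (mul_eq_zero.mp h).resolve_right hab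
  obtain ⟨t, hq1, hq2⟩ : ∃ t : ℝ, u1 - w1 = (u1 - v1) * t ∧ u2 - w2 = (u2 - v2) * t := by
    refine ⟨((u1 - w1) * (u1 - v1) + (u2 - w2) * (u2 - v2)) /
        ((u1 - v1) ^ 2 + (u2 - v2) ^ 2), ?_, ?_⟩
    · rw [← mul_div_assoc, eq_div_iff (ne_of_gt hppos)]
      linear_combination -(u2 - v2) * hD
    · rw [← mul_div_assoc, eq_div_iff (ne_of_gt hppos)]
      linear_combination (u1 - v1) * hD
  have htne : t ≠ 0 := by
    intro h0
    rw [h0, mul_zero] at hq1 hq2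
    exact huw ⟨by linarith [sub_eq_zero.mp hq1], by linarith [sub_eq_zero.mp hq2]⟩
  have hqw : (u1 - w1) * (u1 + w1) + (u2 - w2) * (u2 + w2) = 0 := by
    linear_combination hu - hw
  have hpu : (u1 - v1) * (u1 + v1) + (u2 - v2) * (u2 + v2) = 0 := by
    linear_combination hu - hv
  have hpw : (u1 - v1) * (u1 + w1) + (u2 - v2) * (u2 + w2) = 0 := by
    have h : ((u1 - v1) * (u1 + w1) + (u2 - v2) * (u2 + w2)) * t = 0 := by
      linear_combination -(u1 + w1) * hq1 - (u2 + w2) * hq2 + hqw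
    exact (mul_eq_zero.mp h).resolve_right htne
  have hdot : (u1 - v1) * (w1 - v1) + (u2 - v2) * (w2 - v2) = 0 := by
    linear_combination hpw - hpu
  have hcross : (u1 - v1) * (w2 - v2) - (u2 - v2) * (w1 - v1) = 0 := by
    linear_combination -hD
  have hzero : ((w1 - v1) ^ 2 + (w2 - v2) ^ 2) * ((u1 - v1) ^ 2 + (u2 - v2) ^ 2) = 0 := by
    linear_combination ((u1 - v1) * (w1 - v1) + (u2 - v2) * (w2 - v2)) * hdot
      + ((u1 - v1) * (w2 - v2) - (u2 - v2) * (w1 - v1)) * hcross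
  have hr : (w1 - v1) ^ 2 + (w2 - v2) ^ 2 = 0 :=
    (mul_eq_zero.mp hzero).resolve_right (ne_of_gt hppos)
  have h1 : w1 - v1 = 0 := by
    have h : (w1 - v1) ^ 2 = 0 := by linarith [sq_nonneg (w2 - v2), sq_nonneg (w1 - v1)]
    exact pow_eq_zero_iff (by norm_num) |>.mp h
  have h2 : w2 - v2 = 0 := by
    have h : (w2 - v2) ^ 2 = 0 := by linarith [sq_nonneg (w1 - v1), sq_nonneg (w2 - v2)]
    exact pow_eq_zero_iff (by norm_num) |>.mp h
  exact hvw ⟨(sub_eq_zero.mp h1).symm, (sub_eq_zero.mp h2).symm⟩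

lemma angle_ne (n : ℕ) (i j : Fin n) (hij : i ≠ j) :
    ¬ (Real.cos (2 * (i.val : ℝ) * Real.pi / (n : ℝ)) =
         Real.cos (2 * (j.val : ℝ) * Real.pi / (n : ℝ)) ∧
       Real.sin (2 * (i.val : ℝ) * Real.pi / (n : ℝ)) =
         Real.sin (2 * (j.val : ℝ) * Real.pi / (n : ℝ))) := by
  rintro ⟨hc, hs⟩
  have hnpos : (0 : ℝ) < n := by
    have := i.pos
    exact_mod_cast this
  have hπ := Real.pi_pos
  set θi : ℝ := 2 * (i.val : ℝ) * Real.pi / (n : ℝ) with hθi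
  set θj : ℝ := 2 * (j.val : ℝ) * Real.pi / (n : ℝ) with hθj
  have hcos1 : Real.cos (θi - θj) = 1 := by
    rw [Real.cos_sub, hc, hs, ← Real.sin_sq_add_cos_sq θj]; ring
  have hib : 0 ≤ θi ∧ θi < 2 * Real.pi := by
    constructor
    · rw [hθi]; positivity
    · rw [hθi, div_lt_iff₀ hnpos]
      have : (i.val : ℝ) < (n : ℝ) := by exact_mod_cast i.isLt
      nlinarith
  have hjb : 0 ≤ θj ∧ θj < 2 * Real.pi := by
    constructor
    · rw [hθj]; positivity
    · rw [hθj, div_lt_iff₀ hnpos]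
      have : (j.val : ℝ) < (n : ℝ) := by exact_mod_cast j.isLt
      nlinarith
  have heq : θi - θj = 0 := by
    rw [← Real.cos_eq_one_iff_of_lt_of_lt (by linarith [hib.1, hib.2, hjb.1, hjb.2])
      (by linarith [hib.1, hib.2, hjb.1, hjb.2])]
    exact hcos1
  rw [hθi, hθj] at heq
  field_simp at heq
  have h3 : ((i.val : ℝ) - (j.val : ℝ)) * (2 * Real.pi) = 0 := by linear_combination heq
  have h4 : (i.val : ℝ) - (j.val : ℝ) = 0 :=
    (mul_eq_zero.mp h3).resolve_right (by positivity)
  have : (i.val : ℝ) = (j.val : ℝ) := by linarith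
  exact hij (Fin.ext (by exact_mod_cast this))


lemma stretch_lin (n : ℕ) (R : ℝ) (x : (ℝ × ℝ) × (Fin n → ℝ × ℝ)) (m : Fin n)
    (h : enorm2 (x.1 - Bpt n R m) = 2) :
    2 * R * (x.1.1 * Real.cos (2 * (m.val : ℝ) * Real.pi / (n : ℝ))
      + x.1.2 * Real.sin (2 * (m.val : ℝ) * Real.pi / (n : ℝ)))
      = x.1.1 ^ 2 + x.1.2 ^ 2 + R ^ 2 - 4 := by
  set c := Real.cos (2 * (m.val : ℝ) * Real.pi / (n : ℝ)) with hc
  set s := Real.sin (2 * (m.val : ℝ) * Real.pi / (n : ℝ)) with hs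
  have hpy : s ^ 2 + c ^ 2 = 1 := Real.sin_sq_add_cos_sq _
  have h1 : (x.1 - Bpt n R m).1 = x.1.1 - R * c := by
    simp [Bpt, Prod.fst_sub, hc]
  have h2 : (x.1 - Bpt n R m).2 = x.1.2 - R * s := by
    simp [Bpt, Prod.snd_sub, hs]
  unfold enorm2 at h
  rw [h1, h2] at h
  have h0 : (0:ℝ) ≤ (x.1.1 - R * c) ^ 2 + (x.1.2 - R * s) ^ 2 := by positivity
  have h4 : (x.1.1 - R * c) ^ 2 + (x.1.2 - R * s) ^ 2 = 4 := by
    rw [← Real.sq_sqrt h0, h]; norm_num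
  linear_combination -h4 + R ^ 2 * hpy

set_option maxHeartbeats 1000000 in
/-- If `0 < R < 2`, no configuration in `M_n(R)` has three (or more) arms stretched out:
there are no pairwise distinct indices `i, j, k` with
`|C − B_i| = |C − B_j| = |C − B_k| = 2`. -/
theorem stmt1 (n : ℕ) (hn : 2 ≤ n) (R : ℝ) (hR0 : 0 < R) (hR2 : R < 2)
    (x : (ℝ × ℝ) × (Fin n → ℝ × ℝ)) (hx : x ∈ MSpace n R) :
    ¬ ∃ i j k : Fin n, i ≠ j ∧ i ≠ k ∧ j ≠ k ∧
        enorm2 (x.1 - Bpt n R i) = 2 ∧ enorm2 (x.1 - Bpt n R j) = 2 ∧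
        enorm2 (x.1 - Bpt n R k) = 2 := by
  rintro ⟨i, j, k, hij, hik, hjk, hi, hj, hk⟩
  set a := x.1.1 with ha
  set b := x.1.2 with hb
  set ci := Real.cos (2 * (i.val : ℝ) * Real.pi / (n : ℝ)) with hci
  set si := Real.sin (2 * (i.val : ℝ) * Real.pi / (n : ℝ)) with hsi
  set cj := Real.cos (2 * (j.val : ℝ) * Real.pi / (n : ℝ)) with hcj
  set sj := Real.sin (2 * (j.val : ℝ) * Real.pi / (n : ℝ)) with hsj
  set ck := Real.cos (2 * (k.val : ℝ) * Real.pi / (n : ℝ)) with hck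
  set sk := Real.sin (2 * (k.val : ℝ) * Real.pi / (n : ℝ)) with hsk
  have li := stretch_lin n R x i hi
  have lj := stretch_lin n R x j hj
  have lk := stretch_lin n R x k hk
  rw [← hci, ← hsi, ← ha, ← hb] at li
  rw [← hcj, ← hsj, ← ha, ← hb] at lj
  rw [← hck, ← hsk, ← ha, ← hb] at lk
  have hpyi : ci ^ 2 + si ^ 2 = 1 := by
    have := Real.sin_sq_add_cos_sq (2 * (i.val : ℝ) * Real.pi / (n : ℝ)); linarith
  have hpyj : cj ^ 2 + sj ^ 2 = 1 := by
    have := Real.sin_sq_add_cos_sq (2 * (j.val : ℝ) * Real.pi / (n : ℝ)); linarith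
  have hpyk : ck ^ 2 + sk ^ 2 = 1 := by
    have := Real.sin_sq_add_cos_sq (2 * (k.val : ℝ) * Real.pi / (n : ℝ)); linarith
  have dij : ¬ (ci = cj ∧ si = sj) := by
    simpa [hci, hsi, hcj, hsj] using angle_ne n i j hij
  have dik : ¬ (ci = ck ∧ si = sk) := by
    simpa [hci, hsi, hck, hsk] using angle_ne n i k hik
  have djk : ¬ (cj = ck ∧ sj = sk) := by
    simpa [hcj, hsj, hck, hsk] using angle_ne n j k hjk
  clear_value a b ci si cj sj ck sk
  have hab : a ^ 2 + b ^ 2 ≠ 0 := by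
    intro h0
    have ha0 : a = 0 := by
      have : a ^ 2 = 0 := by nlinarith [sq_nonneg a, sq_nonneg b]
      exact pow_eq_zero_iff (by norm_num) |>.mp this
    have hb0 : b = 0 := by
      have : b ^ 2 = 0 := by nlinarith [sq_nonneg a, sq_nonneg b]
      exact pow_eq_zero_iff (by norm_num) |>.mp this
    rw [ha0, hb0] at li
    nlinarith
  have hR' : (2 : ℝ) * R ≠ 0 := by positivity
  have lvj : a * cj + b * sj = a * ci + b * si :=
    mul_left_cancel₀ hR' (by linarith)
  have lvk : a * ck + b * sk = a * ci + b * si :=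
    mul_left_cancel₀ hR' (by linarith)
  exact three_on_circle a b (a * ci + b * si) ci si cj sj ck sk hab hpyi hpyj hpyk
    rfl lvj lvk dij dik djk
end

section
/- For every n ≥ 2 and R ≥ 0, there exists a configuration x = (C, J_1, …, J_n) ∈ M_n(R) that simultaneously has a folded arm (C = B_k for some k) and a stretched-out arm (|C − B_j| = 2 for some j) if and only if R = R_n. -/
open Real

lemma enorm2_sub_le_add (a b c : ℝ × ℝ) :
    enorm2 (a - c) ≤ enorm2 (a - b) + enorm2 (b - c) := by
  simp only [enorm2_eq_norm, map_sub]
  exact norm_sub_le_norm_sub_add_norm_sub _ _ _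

-- `w = z/2 · (1 + t i)` lies on the perpendicular bisector of `0` and `z`, and the choice of `t`
-- puts it on the unit circle.
lemma Complex.exists_norm_eq_one_norm_sub_eq_one {z : ℂ} (hz : ‖z‖ ≤ 2) :
    ∃ w : ℂ, ‖w‖ = 1 ∧ ‖z - w‖ = 1 := by
  rcases eq_or_ne z 0 with rfl | hz0
  · exact ⟨1, by simp, by simp⟩
  have hpos : 0 < ‖z‖ := norm_pos_iff.2 hz0
  set t := √(4 / ‖z‖ ^ 2 - 1)
  have ht : 1 + t ^ 2 = (2 / ‖z‖) ^ 2 := by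
    rw [sq_sqrt (by rw [le_sub_iff_add_le, le_div_iff₀ (by positivity)]; nlinarith)]; ring
  have hnorm : ∀ s : ℝ, s ^ 2 = t ^ 2 → ‖z / 2 * (1 + s * Complex.I)‖ = 1 := by
    intro s hs
    rw [norm_mul, norm_div, ← Complex.ofReal_one, Complex.norm_add_mul_I, one_pow, hs, ht,
      sqrt_sq (by positivity)]
    simp only [Complex.norm_ofNat]
    field_simp
  refine ⟨z / 2 * (1 + t * Complex.I), hnorm t rfl, ?_⟩
  rw [show z - z / 2 * (1 + t * Complex.I) = z / 2 * (1 + (-t : ℝ) * Complex.I) by push_cast; ring]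
  exact hnorm _ (neg_sq t)

lemma exists_enorm2_eq_one_of_enorm2_sub_le_two {P Q : ℝ × ℝ} (h : enorm2 (P - Q) ≤ 2) :
    ∃ J : ℝ × ℝ, enorm2 (P - J) = 1 ∧ enorm2 (J - Q) = 1 := by
  set e := Complex.equivRealProdLm.symm
  rw [enorm2_eq_norm] at h
  obtain ⟨w, hw, hzw⟩ := Complex.exists_norm_eq_one_norm_sub_eq_one h
  refine ⟨Q + e.symm w, ?_, ?_⟩
  · rwa [enorm2_eq_norm, sub_add_eq_sub_sub, map_sub, LinearEquiv.apply_symm_apply]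
  · rwa [enorm2_eq_norm, add_sub_cancel_left, LinearEquiv.apply_symm_apply]

lemma exists_mem_MSpace_iff {n : ℕ} {R : ℝ} (C : ℝ × ℝ) :
    (∃ J, (C, J) ∈ MSpace n R) ↔ ∀ k, enorm2 (C - Bpt n R k) ≤ 2 := by
  constructor
  · rintro ⟨J, hJ⟩ k
    have := enorm2_sub_le_add C (J k) (Bpt n R k)
    linarith [(hJ k).1, (hJ k).2]
  · intro h
    choose J hJ using fun k => exists_enorm2_eq_one_of_enorm2_sub_le_two (h k)
    exact ⟨J, hJ⟩

-- The distance between the `n`-th roots of unity `1` and `exp (2π i t / n)`.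
noncomputable def chord (n : ℕ) (t : ℝ) : ℝ := √(2 - 2 * cos (2 * t * π / n))

section Chord

variable {n : ℕ}

lemma chord_neg (t : ℝ) : chord n (-t) = chord n t := by
  rw [chord, chord, mul_neg, neg_mul, neg_div, cos_neg]

lemma chord_nat_mul_sub (hn : n ≠ 0) (q : ℕ) (t : ℝ) : chord n (n * q - t) = chord n t := by
  rw [chord, chord, ← cos_nat_mul_two_pi_sub (2 * t * π / n) q]
  congr 4
  field_simp

lemma chord_le_chord_half {t : ℕ} (ht : t ≤ n) : chord n t ≤ chord n (n / 2 : ℕ) := by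
  wlog hth : t ≤ n / 2 generalizing t
  · have hn : n ≠ 0 := by omega
    rw [← chord_nat_mul_sub hn 1, Nat.cast_one, mul_one, ← Nat.cast_sub ht]
    exact this (Nat.sub_le n t) (by omega)
  have hnpos : (0 : ℝ) ≤ n := n.cast_nonneg
  have hhalf : (2 * (n / 2 : ℕ) : ℝ) ≤ n := by exact_mod_cast Nat.mul_div_le n 2
  have hcos : cos (2 * (n / 2 : ℕ) * π / n) ≤ cos (2 * t * π / n) := by
    refine cos_le_cos_of_nonneg_of_le_pi (by positivity)
      (div_le_of_le_mul₀ hnpos pi_pos.le (by nlinarith [pi_pos])) ?_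
    gcongr
  exact sqrt_le_sqrt (by linarith)

lemma chord_sub_le_chord_half {a b : ℕ} (ha : a ≤ n) (hb : b ≤ n) :
    chord n (a - b) ≤ chord n (n / 2 : ℕ) := by
  rcases le_total b a with h | h
  · rw [← Nat.cast_sub h]
    exact chord_le_chord_half (by omega)
  · rw [← neg_sub, chord_neg, ← Nat.cast_sub h]
    exact chord_le_chord_half (by omega)

lemma dmax_eq_chord (hn : 0 < n) : dmax n = chord n (n / 2 : ℕ) := by
  rw [dmax, chord]
  split_ifs with h
  · obtain ⟨m, rfl⟩ := h
    have hm : (m : ℝ) ≠ 0 := by exact_mod_cast (by omega : m ≠ 0)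
    have : 2 * ((m + m) / 2 : ℕ) * π / ((m + m : ℕ) : ℝ) = π := by
      rw [show (m + m) / 2 = m by omega]; push_cast; field_simp; ring
    rw [this, cos_pi, show (2 : ℝ) - 2 * -1 = 2 ^ 2 by norm_num, sqrt_sq zero_le_two]
  · rfl

lemma dmax_pos (hn : 2 ≤ n) : 0 < dmax n := by
  rw [dmax_eq_chord (by omega), chord, sqrt_pos, sub_pos]
  have hnpos : (0 : ℝ) < n := by positivity
  have hhalf : (1 : ℝ) ≤ (n / 2 : ℕ) := by exact_mod_cast (by omega : 1 ≤ n / 2)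
  have hhalf' : (2 * (n / 2 : ℕ) : ℝ) ≤ n := by exact_mod_cast Nat.mul_div_le n 2
  have := cos_lt_cos_of_nonneg_of_le_pi le_rfl
    (div_le_of_le_mul₀ hnpos.le pi_pos.le (by nlinarith [pi_pos]))
    (by positivity : 0 < 2 * ((n / 2 : ℕ) : ℝ) * π / n)
  rw [cos_zero] at this
  linarith

end Chord

section Endpoints

variable {n : ℕ} {R : ℝ}

lemma enorm2_Bpt_sub_Bpt (hR : 0 ≤ R) (k j : Fin n) :
    enorm2 (Bpt n R k - Bpt n R j) = R * chord n (k - j) := by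
  set a := 2 * (k : ℝ) * π / n
  set b := 2 * (j : ℝ) * π / n
  have hab : 2 * ((k : ℝ) - j) * π / n = a - b := by ring
  have key : (R * cos a - R * cos b) ^ 2 + (R * sin a - R * sin b) ^ 2
      = R ^ 2 * (2 - 2 * cos (a - b)) := by
    rw [cos_sub]
    nlinarith [sin_sq_add_cos_sq a, sin_sq_add_cos_sq b]
  rw [enorm2, chord, hab, Prod.fst_sub, Prod.snd_sub, Bpt, Bpt, key, sqrt_mul (sq_nonneg R),
    sqrt_sq hR]

lemma enorm2_Bpt_sub_Bpt_le (hR : 0 ≤ R) (k j : Fin n) :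
    enorm2 (Bpt n R k - Bpt n R j) ≤ R * dmax n := by
  rw [enorm2_Bpt_sub_Bpt hR, dmax_eq_chord k.pos]
  exact mul_le_mul_of_nonneg_left (chord_sub_le_chord_half k.isLt.le j.isLt.le) hR

lemma exists_enorm2_Bpt_sub_Bpt_eq (hR : 0 ≤ R) (k : Fin n) :
    ∃ j : Fin n, enorm2 (Bpt n R k - Bpt n R j) = R * dmax n := by
  have hn := k.pos
  refine ⟨⟨(k + n / 2) % n, Nat.mod_lt _ hn⟩, ?_⟩
  have hdiv : ((k + n / 2) % n : ℕ) + (n : ℝ) * ((k + n / 2) / n : ℕ) = k + (n / 2 : ℕ) := by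
    exact_mod_cast Nat.mod_add_div _ _
  have hk : (k : ℝ) - ((k + n / 2) % n : ℕ) = n * ((k + n / 2) / n : ℕ) - (n / 2 : ℕ) := by
    linarith
  rw [enorm2_Bpt_sub_Bpt hR, dmax_eq_chord hn, hk, chord_nat_mul_sub hn.ne']

lemma folded_stretched_iff (hR : 0 ≤ R) (k : Fin n) :
    ((∀ i, enorm2 (Bpt n R k - Bpt n R i) ≤ 2) ∧ ∃ j, enorm2 (Bpt n R k - Bpt n R j) = 2) ↔
      R * dmax n = 2 := by
  obtain ⟨i, hi⟩ := exists_enorm2_Bpt_sub_Bpt_eq hR k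
  constructor
  · rintro ⟨hle, j, hj⟩
    exact le_antisymm (hi ▸ hle i) (hj ▸ enorm2_Bpt_sub_Bpt_le hR k j)
  · intro h
    exact ⟨fun j => h ▸ enorm2_Bpt_sub_Bpt_le hR k j, i, hi.trans h⟩

end Endpoints

/-- For `n ≥ 2` and `R ≥ 0`, there exists a configuration in `M_n(R)` that has
simultaneously a folded arm (`C = B_k` for some `k`) and a stretched-out arm
(`|C − B_j| = 2` for some `j`) if and only if `R = R_n`. -/
theorem stmt3 (n : ℕ) (hn : 2 ≤ n) (R : ℝ) (hR : 0 ≤ R) :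
    (∃ x ∈ MSpace n R, (∃ k : Fin n, x.1 = Bpt n R k) ∧
        (∃ j : Fin n, enorm2 (x.1 - Bpt n R j) = 2)) ↔ R = Rcrit n := by
  rw [Rcrit, eq_div_iff (dmax_pos hn).ne']
  constructor
  · rintro ⟨⟨C, J⟩, hJ, ⟨k, rfl : C = _⟩, hj⟩
    exact (folded_stretched_iff hR k).1 ⟨(exists_mem_MSpace_iff _).1 ⟨J, hJ⟩, hj⟩
  · intro h
    let k : Fin n := ⟨0, by omega⟩
    obtain ⟨hle, hj⟩ := (folded_stretched_iff hR k).2 h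
    obtain ⟨J, hJ⟩ := (exists_mem_MSpace_iff _).2 hle
    exact ⟨(Bpt n R k, J), hJ, ⟨k, rfl⟩, hj⟩
end

section
/- Suppose 0 < R < 2 and R ≠ R_n. Then at every point x ∈ F⁻¹(0) = M_n(R), the Fréchet derivative of F at x is a surjective linear map from ℝ^{2n+2} onto ℝ^{2n} (equivalently, the 2n gradient vectors ∇f_1(x), …, ∇f_{2n}(x) are linearly independent). -/
/-- The defining map `F = (f_1, …, f_{2n}) : ℝ^{2n+2} → ℝ^{2n}`, with
`f_{2k−1} = |C − J_k|² − 1` and `f_{2k} = |J_k − B_k|² − 1`, packaged as a map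
to `Fin n → ℝ × ℝ` (the `k`-th pair being `(f_{2k−1}, f_{2k})`). -/
noncomputable def Fmap (n : ℕ) (R : ℝ) (x : (ℝ × ℝ) × (Fin n → ℝ × ℝ)) :
    Fin n → ℝ × ℝ := fun k =>
  ((x.1.1 - (x.2 k).1) ^ 2 + (x.1.2 - (x.2 k).2) ^ 2 - 1,
   ((x.2 k).1 - (Bpt n R k).1) ^ 2 + ((x.2 k).2 - (Bpt n R k).2) ^ 2 - 1)

/-!
At `x = (C, J)` the derivative sends `(δC, δJ)` to `(2⟨u_k, δC - δJ_k⟩, 2⟨v_k, δJ_k⟩)_k`, where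
`u_k = C - J_k` and `v_k = J_k - B_k` are unit vectors. When `u_k, v_k` are independent, the `k`-th
pair of equations can be solved for `δJ_k` whatever `δC` is. An aligned arm (`v_k = ±u_k`) instead
imposes one linear condition `⟨u_k, δC⟩ = r_k`, so it suffices that the aligned arms are at most
two, with non-parallel `u_k`.

An aligned arm is folded (`C = B_k`) or stretched (`|C - B_k| = 2`). A folded arm admits no other
aligned arm: a second folded one needs `B_j = B_k`, and a stretched one forces `R d_n = 2`, i.e.
`R = R_n`. Stretched arms put `C` at distance `2` from their endpoints `B_k`, which lie on the circle
of radius `R < 2` about `0`; as `C ≠ 0`, the two circles meet in at most two points. Two stretched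
arms with parallel links would need `|B_k - B_j| = 4 > 2R`.
-/

namespace Spider

open Real

def dot (a b : ℝ × ℝ) : ℝ := a.1 * b.1 + a.2 * b.2

def cross (a b : ℝ × ℝ) : ℝ := a.1 * b.2 - a.2 * b.1

lemma dot_comm (a b : ℝ × ℝ) : dot a b = dot b a := by
  unfold dot; ring

lemma dot_neg_neg (a b : ℝ × ℝ) : dot (-a) (-b) = dot a b := by
  unfold dot; simp only [Prod.fst_neg, Prod.snd_neg]; ring

lemma dot_smul_right (a b : ℝ × ℝ) (t : ℝ) : dot a (t • b) = t * dot a b := by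
  unfold dot; simp only [Prod.smul_fst, Prod.smul_snd, smul_eq_mul]; ring

lemma dot_sub_right (a b c : ℝ × ℝ) : dot a (b - c) = dot a b - dot a c := by
  unfold dot; simp only [Prod.fst_sub, Prod.snd_sub]; ring

lemma dot_sq_add_cross_sq (a b : ℝ × ℝ) : dot a b ^ 2 + cross a b ^ 2 = dot a a * dot b b := by
  unfold dot cross; ring

lemma ne_zero_of_dot_self_eq_one {a : ℝ × ℝ} (ha : dot a a = 1) : a ≠ 0 := by
  rintro rfl
  simp [dot] at ha

lemma dot_self_ne_zero {a : ℝ × ℝ} (ha : a ≠ 0) : dot a a ≠ 0 := by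
  contrapose! ha
  unfold dot at ha
  ext <;> simp only [Prod.fst_zero, Prod.snd_zero] <;> nlinarith [sq_nonneg a.1, sq_nonneg a.2]

lemma exists_dot_eq_dot_eq {a b : ℝ × ℝ} (h : cross a b ≠ 0) (r s : ℝ) :
    ∃ w, dot a w = r ∧ dot b w = s := by
  refine ⟨((r * b.2 - s * a.2) / cross a b, (s * a.1 - r * b.1) / cross a b), ?_, ?_⟩ <;>
  · unfold dot
    field_simp
    unfold cross
    ring

lemma eq_or_eq_neg_of_cross_eq_zero {a b : ℝ × ℝ} (ha : dot a a = 1) (hb : dot b b = 1)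
    (h : cross a b = 0) : b = a ∨ b = -a := by
  have hdot : (dot a b - 1) * (dot a b + 1) = 0 := by
    linear_combination dot_sq_add_cross_sq a b + (dot b b) * ha + hb - cross a b * h
  unfold dot at *
  rcases mul_eq_zero.1 hdot with h1 | h1
  · left
    ext <;> nlinarith [sq_nonneg (b.1 - a.1), sq_nonneg (b.2 - a.2)]
  · right
    ext <;> simp only [Prod.fst_neg, Prod.snd_neg] <;>
      nlinarith [sq_nonneg (b.1 + a.1), sq_nonneg (b.2 + a.2)]

lemma eq_of_dot_eq_of_cross_eq {a p q : ℝ × ℝ} (ha : a ≠ 0) (h₁ : dot a p = dot a q)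
    (h₂ : cross a p = cross a q) : p = q := by
  have ha' := dot_self_ne_zero ha
  unfold dot cross at *
  ext
  · exact mul_right_cancel₀ ha' (by linear_combination a.1 * h₁ - a.2 * h₂)
  · exact mul_right_cancel₀ ha' (by linear_combination a.2 * h₁ + a.1 * h₂)

lemma dot_sub_self (c p : ℝ × ℝ) : dot (c - p) (c - p) = dot c c - 2 * dot c p + dot p p := by
  unfold dot; simp only [Prod.fst_sub, Prod.snd_sub]; ring

lemma eq_zero_of_three_common_points {c p q r : ℝ × ℝ} {ρ σ : ℝ}
    (hpq : p ≠ q) (hpr : p ≠ r) (hqr : q ≠ r)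
    (hp : dot p p = ρ) (hq : dot q q = ρ) (hr : dot r r = ρ)
    (hp' : dot (c - p) (c - p) = σ) (hq' : dot (c - q) (c - q) = σ)
    (hr' : dot (c - r) (c - r) = σ) : c = 0 := by
  by_contra hc
  set s := (dot c c + ρ - σ) / 2
  have hline : ∀ z, dot z z = ρ → dot (c - z) (c - z) = σ →
      dot c z = s ∧ cross c z ^ 2 = dot c c * ρ - s ^ 2 := by
    intro z hz hz'
    have hcz : dot c z = s := by linear_combination (dot_sub_self c z - hz' + hz) / 2
    exact ⟨hcz, by linear_combination dot_sq_add_cross_sq c z + dot c c * hz - (dot c z + s) * hcz⟩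
  obtain ⟨hpd, hpc⟩ := hline p hp hp'
  obtain ⟨hqd, hqc⟩ := hline q hq hq'
  obtain ⟨hrd, hrc⟩ := hline r hr hr'
  have hopp : ∀ z w, dot c z = s → dot c w = s → cross c z ^ 2 = cross c w ^ 2 → z ≠ w →
      cross c z = -cross c w := fun z w hz hw hzw hne =>
    (sq_eq_sq_iff_eq_or_eq_neg.1 hzw).resolve_left
      fun h => hne (eq_of_dot_eq_of_cross_eq hc (hz.trans hw.symm) h)
  have hpq' := hopp p q hpd hqd (hpc.trans hqc.symm) hpq
  have hpr' := hopp p r hpd hrd (hpc.trans hrc.symm) hpr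
  exact hqr (eq_of_dot_eq_of_cross_eq hc (hqd.trans hrd.symm) (by linarith))

lemma dot_add_self_le_four {a b : ℝ × ℝ} (ha : dot a a = 1) (hb : dot b b = 1) :
    dot (a + b) (a + b) ≤ 4 := by
  unfold dot at *
  simp only [Prod.fst_add, Prod.snd_add]
  nlinarith [sq_nonneg (a.1 - b.1), sq_nonneg (a.2 - b.2)]

lemma cross_ne_zero_of_sub_eq_two_smul {c p q a b : ℝ × ℝ} (hpq : p ≠ q)
    (hp : dot p p < 4) (hq : dot q q < 4) (ha : dot a a = 1) (hb : dot b b = 1)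
    (hpa : c - p = (2 : ℝ) • a) (hqb : c - q = (2 : ℝ) • b) : cross a b ≠ 0 := by
  intro h
  rcases eq_or_eq_neg_of_cross_eq_zero ha hb h with hba | hba
  · exact hpq (sub_right_inj.1 (by rw [hpa, hqb, hba]))
  · have hqp : q - p = (4 : ℝ) • a := by
      rw [← sub_sub_sub_cancel_left p q c, hpa, hqb, hba]
      module
    have h16 : dot (q - p) (q - p) = 16 := by
      rw [hqp, dot_smul_right, dot_comm, dot_smul_right, ha]
      norm_num
    unfold dot at *
    simp only [Prod.fst_sub, Prod.snd_sub] at h16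
    nlinarith [sq_nonneg (p.1 + q.1), sq_nonneg (p.2 + q.2)]

lemma exists_forall_dot_eq {ι : Type*} {S : Set ι} {u : ι → ℝ × ℝ} (hS : S.encard ≤ 2)
    (hind : S.Pairwise fun k j => cross (u k) (u j) ≠ 0) (hu : ∀ k ∈ S, u k ≠ 0) (r : ι → ℝ) :
    ∃ c, ∀ k ∈ S, dot (u k) c = r k := by
  by_cases hS1 : S.encard ≤ 1
  · rcases Set.encard_le_one_iff_eq.1 hS1 with rfl | ⟨k, rfl⟩
    · exact ⟨0, by simp⟩
    · have hk := dot_self_ne_zero (hu k rfl)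
      refine ⟨(r k / dot (u k) (u k)) • u k, ?_⟩
      rintro _ rfl
      rw [dot_smul_right, div_mul_cancel₀ _ hk]
  · have hS2 : S.encard = 2 := hS.antisymm (Order.add_one_le_of_lt (not_le.1 hS1))
    obtain ⟨k, j, hkj, rfl⟩ := Set.encard_eq_two.1 hS2
    obtain ⟨c, hk, hj⟩ := exists_dot_eq_dot_eq (hind (by simp) (by simp) hkj) (r k) (r j)
    refine ⟨c, ?_⟩
    rintro _ (rfl | rfl) <;> assumption

lemma exists_dot_sub_eq_and_dot_eq {u v : ℝ × ℝ} (hu : dot u u = 1) (hv : dot v v = 1)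
    {a b : ℝ} {c : ℝ × ℝ} (hc : cross u v = 0 → dot u c = a + dot u v * b) :
    ∃ w, dot u (c - w) = a ∧ dot v w = b := by
  by_cases huv : cross u v = 0
  · have hsq : dot u v ^ 2 = 1 := by
      linear_combination dot_sq_add_cross_sq u v + dot v v * hu + hv - cross u v * huv
    refine ⟨(dot u v * b) • u, ?_, ?_⟩
    · rw [dot_sub_right, dot_smul_right, hc huv, hu]; ring
    · rw [dot_smul_right, dot_comm v]
      linear_combination b * hsq
  · obtain ⟨w, hw₁, hw₂⟩ := exists_dot_eq_dot_eq huv (dot u c - a) b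
    exact ⟨w, by rw [dot_sub_right, hw₁]; ring, hw₂⟩

lemma cos_floor_half_le_cos_nat {n δ : ℕ} (hδ : δ ≤ n) :
    cos (2 * ((n / 2 : ℕ) : ℝ) * π / n) ≤ cos (2 * δ * π / n) := by
  rcases Nat.eq_zero_or_pos n with rfl | hn
  · simp
  have hn' : (0 : ℝ) < n := by exact_mod_cast hn
  have hmono : ∀ d : ℕ, d ≤ n / 2 → cos (2 * ((n / 2 : ℕ) : ℝ) * π / n) ≤ cos (2 * d * π / n) := by
    intro d hd
    refine cos_le_cos_of_nonneg_of_le_pi (by positivity) ?_ (by gcongr)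
    rw [div_le_iff₀ hn']
    have : ((n / 2 : ℕ) : ℝ) * 2 ≤ n := by exact_mod_cast Nat.div_mul_le_self n 2
    nlinarith [pi_pos]
  rcases le_or_gt δ (n / 2) with hδ' | hδ'
  · exact hmono δ hδ'
  · have hsymm : cos (2 * δ * π / n) = cos (2 * ((n - δ : ℕ) : ℝ) * π / n) := by
      rw [← cos_two_pi_sub, Nat.cast_sub hδ]
      field_simp
    rw [hsymm]
    exact hmono _ (by omega)

lemma cos_floor_half_le_cos_int {n : ℕ} {z : ℤ} (hz : z.natAbs ≤ n) :
    cos (2 * ((n / 2 : ℕ) : ℝ) * π / n) ≤ cos (2 * z * π / n) := by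
  have habs : cos (2 * z * π / n) = cos (2 * (z.natAbs : ℝ) * π / n) := by
    rw [Nat.cast_natAbs, Int.cast_abs, ← cos_abs]
    congr 1
    rw [abs_div, abs_mul, abs_mul, abs_of_pos pi_pos, abs_two, Nat.abs_cast]
  rw [habs]
  exact cos_floor_half_le_cos_nat hz

lemma dmax_nonneg (n : ℕ) : 0 ≤ dmax n := by
  unfold dmax
  split_ifs
  · norm_num
  · exact sqrt_nonneg _

lemma dmax_sq {n : ℕ} (hn : n ≠ 0) :
    dmax n ^ 2 = 2 - 2 * cos (2 * ((n / 2 : ℕ) : ℝ) * π / n) := by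
  unfold dmax
  split_ifs with h
  · obtain ⟨m, rfl⟩ := h
    have hm : (m : ℝ) ≠ 0 := by exact_mod_cast (show m ≠ 0 by omega)
    have : 2 * (((m + m) / 2 : ℕ) : ℝ) * π / ((m + m : ℕ) : ℝ) = π := by
      rw [show (m + m) / 2 = m by omega]
      push_cast
      field_simp
      ring
    rw [this, cos_pi]
    norm_num
  · rw [sq_sqrt]
    linarith [cos_le_one (2 * ((n / 2 : ℕ) : ℝ) * π / n)]

lemma Bpt_dot_self (n : ℕ) (R : ℝ) (k : Fin n) : dot (Bpt n R k) (Bpt n R k) = R ^ 2 := by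
  unfold dot Bpt
  linear_combination R ^ 2 * sin_sq_add_cos_sq (2 * (k : ℝ) * π / n)

lemma Bpt_sub_dot_self (n : ℕ) (R : ℝ) (k m : Fin n) :
    dot (Bpt n R k - Bpt n R m) (Bpt n R k - Bpt n R m)
      = R ^ 2 * (2 - 2 * cos (2 * (((k : ℤ) - m : ℤ) : ℝ) * π / n)) := by
  have hsub : 2 * (((k : ℤ) - m : ℤ) : ℝ) * π / n = 2 * (k : ℝ) * π / n - 2 * (m : ℝ) * π / n := by
    push_cast; ring
  rw [hsub, cos_sub]
  unfold dot Bpt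
  simp only [Prod.fst_sub, Prod.snd_sub]
  linear_combination R ^ 2 * sin_sq_add_cos_sq (2 * (k : ℝ) * π / n)
    + R ^ 2 * sin_sq_add_cos_sq (2 * (m : ℝ) * π / n)

lemma Bpt_injective {n : ℕ} {R : ℝ} (hR : R ≠ 0) : Function.Injective (Bpt n R) := by
  intro k m hkm
  have h := Bpt_sub_dot_self n R k m
  rw [hkm, sub_self] at h
  have hcos : cos (2 * (((k : ℤ) - m : ℤ) : ℝ) * π / n) = 1 := by
    have : R = 0 ∨ 2 - 2 * cos (2 * (((k : ℤ) - m : ℤ) : ℝ) * π / n) = 0 := by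
      simpa [dot] using h.symm
    linarith [this.resolve_left hR]
  obtain ⟨z, hz⟩ := (cos_eq_one_iff _).1 hcos
  have hn : (n : ℝ) ≠ 0 := by exact_mod_cast k.pos.ne'
  have hz' : z * n = (k : ℤ) - m := by
    have : (z : ℝ) * n = ((k : ℤ) - m : ℤ) := by
      field_simp at hz
      exact hz
    exact_mod_cast this
  have hk := k.isLt
  have hm := m.isLt
  have : z = 0 := by
    rcases lt_trichotomy z 0 with hz0 | hz0 | hz0
    · nlinarith
    · exact hz0
    · nlinarith
  subst this
  ext
  omega

lemma Bpt_sub_dot_self_le {n : ℕ} (R : ℝ) (k m : Fin n) :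
    dot (Bpt n R k - Bpt n R m) (Bpt n R k - Bpt n R m) ≤ (R * dmax n) ^ 2 := by
  rw [Bpt_sub_dot_self, mul_pow, dmax_sq k.pos.ne']
  gcongr
  exact cos_floor_half_le_cos_int (by omega)

lemma exists_Bpt_sub_dot_self_eq {n : ℕ} (R : ℝ) (k : Fin n) :
    ∃ m, dot (Bpt n R k - Bpt n R m) (Bpt n R k - Bpt n R m) = (R * dmax n) ^ 2 := by
  have hn := k.pos
  refine ⟨k + ⟨n / 2, Nat.div_lt_self hn one_lt_two⟩, ?_⟩
  set m : Fin n := k + ⟨n / 2, Nat.div_lt_self hn one_lt_two⟩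
  have hm : (m : ℕ) + n * ((k + n / 2) / n) = k + n / 2 := by
    rw [Fin.val_add]
    exact Nat.mod_add_div _ _
  have hangle : 2 * (((k : ℤ) - m : ℤ) : ℝ) * π / n
      = ((k + n / 2) / n : ℕ) * (2 * π) - 2 * ((n / 2 : ℕ) : ℝ) * π / n := by
    have hm' : (m : ℝ) + n * ((k + n / 2) / n : ℕ) = k + (n / 2 : ℕ) := by exact_mod_cast hm
    have hn' : (n : ℝ) ≠ 0 := by exact_mod_cast hn.ne'
    push_cast
    field_simp
    linear_combination -hm'
  rw [Bpt_sub_dot_self, mul_pow, dmax_sq hn.ne', hangle, cos_nat_mul_two_pi_sub]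

lemma hasFDerivAt_sq_add_sq_sub_one (p : ℝ × ℝ) :
    HasFDerivAt (fun q : ℝ × ℝ => q.1 ^ 2 + q.2 ^ 2 - 1)
      ((2 * p.1) • ContinuousLinearMap.fst ℝ ℝ ℝ + (2 * p.2) • ContinuousLinearMap.snd ℝ ℝ ℝ) p :=
  ((((hasFDerivAt_fst (p := p) (𝕜 := ℝ)).pow 2).add
    ((hasFDerivAt_snd (p := p) (𝕜 := ℝ)).pow 2)).sub_const 1).congr_fderiv (by ext <;> simp)

lemma fderiv_Fmap_apply (n : ℕ) (R : ℝ) (x h : (ℝ × ℝ) × (Fin n → ℝ × ℝ)) (k : Fin n) :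
    fderiv ℝ (Fmap n R) x h k
      = (2 * dot (x.1 - x.2 k) (h.1 - h.2 k), 2 * dot (x.2 k - Bpt n R k) (h.2 k)) := by
  let P : Fin n → ((ℝ × ℝ) × (Fin n → ℝ × ℝ)) →L[ℝ] ℝ × ℝ := fun i =>
    (ContinuousLinearMap.proj i).comp (ContinuousLinearMap.snd ℝ _ _)
  let A : Fin n → ((ℝ × ℝ) × (Fin n → ℝ × ℝ)) →L[ℝ] ℝ × ℝ := fun i =>
    ContinuousLinearMap.fst ℝ _ _ - P i
  have hF : ∀ i, HasFDerivAt (fun y => Fmap n R y i) _ x := fun i =>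
    have hC := (hasFDerivAt_sq_add_sq_sub_one (A i x)).comp x (A i).hasFDerivAt
    have hJ := (hasFDerivAt_sq_add_sq_sub_one (P i x - Bpt n R i)).comp x
      (f := fun y => P i y - Bpt n R i) ((P i).hasFDerivAt.sub_const _)
    hC.prodMk hJ
  rw [(hasFDerivAt_pi.2 hF).fderiv]
  simp only [sub_apply, ContinuousLinearMap.coe_fst', ContinuousLinearMap.comp_apply,
    ContinuousLinearMap.coe_snd', ContinuousLinearMap.proj_apply, Prod.fst_sub, Prod.snd_sub,
    ContinuousLinearMap.comp_sub, ContinuousLinearMap.add_comp, ContinuousLinearMap.smul_comp,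
    ContinuousLinearMap.coe_pi', ContinuousLinearMap.prod_apply, add_apply, smul_apply, smul_eq_mul,
    dot, Prod.mk.injEq, A, P]
  constructor <;> ring

section Configuration

variable {n : ℕ} {R : ℝ} {x : (ℝ × ℝ) × (Fin n → ℝ × ℝ)}

def alignedArms (n : ℕ) (R : ℝ) (x : (ℝ × ℝ) × (Fin n → ℝ × ℝ)) : Set (Fin n) :=
  {k | cross (x.1 - x.2 k) (x.2 k - Bpt n R k) = 0}

lemma dot_self_links_of_Fmap_eq_zero (hx : Fmap n R x = 0) (k : Fin n) :
    dot (x.1 - x.2 k) (x.1 - x.2 k) = 1 ∧ dot (x.2 k - Bpt n R k) (x.2 k - Bpt n R k) = 1 := by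
  have h := congrFun hx k
  simp only [Fmap, Pi.zero_apply, Prod.mk_eq_zero] at h
  unfold dot
  simp only [Prod.fst_sub, Prod.snd_sub]
  constructor <;> linarith [h.1, h.2]

lemma folded_or_stretched (hx : Fmap n R x = 0) {k : Fin n} (hk : k ∈ alignedArms n R x) :
    x.1 = Bpt n R k ∨ x.1 - Bpt n R k = (2 : ℝ) • (x.1 - x.2 k) := by
  obtain ⟨hu, hv⟩ := dot_self_links_of_Fmap_eq_zero hx k
  have hsum : x.1 - Bpt n R k = (x.1 - x.2 k) + (x.2 k - Bpt n R k) :=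
    (sub_add_sub_cancel _ _ _).symm
  rcases eq_or_eq_neg_of_cross_eq_zero hu hv hk with h | h
  · right
    rw [hsum, h, two_smul]
  · left
    rw [← sub_eq_zero, hsum, h, add_neg_cancel]

lemma dot_self_sub_Bpt_of_stretched (hx : Fmap n R x = 0) {k : Fin n}
    (hk : x.1 - Bpt n R k = (2 : ℝ) • (x.1 - x.2 k)) :
    dot (x.1 - Bpt n R k) (x.1 - Bpt n R k) = 4 := by
  rw [hk, dot_smul_right, dot_comm, dot_smul_right, (dot_self_links_of_Fmap_eq_zero hx k).1]
  norm_num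

/-- Every `B_m` lies within distance `2` of `C = B_k`, and the farthest of them is at distance
`R d_n`. -/
lemma eq_Rcrit_of_folded_of_stretched (hx : Fmap n R x = 0) (hR : 0 ≤ R) {k j : Fin n}
    (hk : x.1 = Bpt n R k) (hj : dot (x.1 - Bpt n R j) (x.1 - Bpt n R j) = 4) :
    R = Rcrit n := by
  have hle : (R * dmax n) ^ 2 ≤ 4 := by
    obtain ⟨m, hm⟩ := exists_Bpt_sub_dot_self_eq R k
    obtain ⟨hu, hv⟩ := dot_self_links_of_Fmap_eq_zero hx m
    rw [← hm, ← hk, ← sub_add_sub_cancel x.1 (x.2 m) (Bpt n R m)]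
    exact dot_add_self_le_four hu hv
  have hge : 4 ≤ (R * dmax n) ^ 2 := hj ▸ hk ▸ Bpt_sub_dot_self_le R k j
  have hRd : R * dmax n = 2 :=
    (pow_left_inj₀ (mul_nonneg hR (dmax_nonneg n)) zero_le_two two_ne_zero).1
      (by linarith)
  exact eq_div_of_mul_eq (right_ne_zero_of_mul (hRd ▸ two_ne_zero)) hRd

variable (hx : Fmap n R x = 0) (hR0 : 0 < R) (hR2 : R < 2) (hRne : R ≠ Rcrit n)
include hx hR0 hRne

lemma not_folded_of_mem_alignedArms {k j : Fin n} (hkj : k ≠ j) (hk : x.1 = Bpt n R k)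
    (hj : j ∈ alignedArms n R x) : False := by
  rcases folded_or_stretched hx hj with h | h
  · exact hkj (Bpt_injective hR0.ne' (hk.symm.trans h))
  · exact hRne (eq_Rcrit_of_folded_of_stretched hx hR0.le hk (dot_self_sub_Bpt_of_stretched hx h))

lemma stretched_of_mem_alignedArms {k j : Fin n} (hkj : k ≠ j) (hk : k ∈ alignedArms n R x)
    (hj : j ∈ alignedArms n R x) : x.1 - Bpt n R k = (2 : ℝ) • (x.1 - x.2 k) :=
  (folded_or_stretched hx hk).resolve_left
    fun h => not_folded_of_mem_alignedArms hx hR0 hRne hkj h hj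

include hR2

lemma alignedArms_pairwise :
    (alignedArms n R x).Pairwise fun k j => cross (x.1 - x.2 k) (x.1 - x.2 j) ≠ 0 := by
  intro k hk j hj hkj
  have hB : ∀ i, dot (Bpt n R i) (Bpt n R i) < 4 := fun i => by
    rw [Bpt_dot_self]; nlinarith
  exact cross_ne_zero_of_sub_eq_two_smul ((Bpt_injective hR0.ne').ne hkj) (hB k) (hB j)
    (dot_self_links_of_Fmap_eq_zero hx k).1 (dot_self_links_of_Fmap_eq_zero hx j).1
    (stretched_of_mem_alignedArms hx hR0 hRne hkj hk hj)
    (stretched_of_mem_alignedArms hx hR0 hRne hkj.symm hj hk)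

lemma alignedArms_encard_le_two : (alignedArms n R x).encard ≤ 2 := by
  by_contra! h
  obtain ⟨T, hT, hT3⟩ := Set.exists_subset_encard_eq (Order.add_one_le_of_lt h)
  obtain ⟨k, j, l, hkj, hkl, hjl, rfl⟩ := Set.encard_eq_three.1 hT3
  have hstr : ∀ {i i'}, i ≠ i' → i ∈ ({k, j, l} : Set (Fin n)) → i' ∈ ({k, j, l} : Set (Fin n)) →
      dot (x.1 - Bpt n R i) (x.1 - Bpt n R i) = 4 := fun hii' hi hi' =>
    dot_self_sub_Bpt_of_stretched hx
      (stretched_of_mem_alignedArms hx hR0 hRne hii' (hT hi) (hT hi'))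
  have hinj : ∀ {i i' : Fin n}, i ≠ i' → Bpt n R i ≠ Bpt n R i' := (Bpt_injective hR0.ne').ne
  have hC : x.1 = 0 := eq_zero_of_three_common_points (hinj hkj) (hinj hkl) (hinj hjl)
    (Bpt_dot_self n R k) (Bpt_dot_self n R j) (Bpt_dot_self n R l)
    (hstr hkj (by simp) (by simp)) (hstr hkj.symm (by simp) (by simp))
    (hstr hkl.symm (by simp) (by simp))
  have h4 := hstr hkj (by simp) (by simp)
  rw [hC, zero_sub, dot_neg_neg, Bpt_dot_self] at h4
  nlinarith

end Configuration

end Spider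

theorem stmt4_general (n : ℕ) (R : ℝ) (hR0 : 0 < R) (hR2 : R < 2)
    (hRne : R ≠ Rcrit n)
    (x : (ℝ × ℝ) × (Fin n → ℝ × ℝ)) (hx : Fmap n R x = 0) :
    Function.Surjective (fderiv ℝ (Fmap n R) x) := by
  intro y
  have hunit := Spider.dot_self_links_of_Fmap_eq_zero hx
  obtain ⟨c, hc⟩ := Spider.exists_forall_dot_eq (Spider.alignedArms_encard_le_two hx hR0 hR2 hRne)
    (Spider.alignedArms_pairwise hx hR0 hR2 hRne)
    (fun k _ => Spider.ne_zero_of_dot_self_eq_one (hunit k).1)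
    (fun k => (y k).1 / 2 + Spider.dot (x.1 - x.2 k) (x.2 k - Bpt n R k) * ((y k).2 / 2))
  choose w hw using fun k => Spider.exists_dot_sub_eq_and_dot_eq (hunit k).1 (hunit k).2 (hc k)
  refine ⟨(c, w), funext fun k => ?_⟩
  rw [Spider.fderiv_Fmap_apply, (hw k).1, (hw k).2]
  ext <;> ring

/-- If `0 < R < 2` and `R ≠ R_n`, then at every point `x ∈ F⁻¹(0) = M_n(R)` the
Fréchet derivative of `F` at `x` is surjective onto `ℝ^{2n}`. -/
theorem stmt4 (n : ℕ) (hn : 2 ≤ n) (R : ℝ) (hR0 : 0 < R) (hR2 : R < 2)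
    (hRne : R ≠ Rcrit n)
    (x : (ℝ × ℝ) × (Fin n → ℝ × ℝ)) (hx : Fmap n R x = 0) :
    Function.Surjective (fderiv ℝ (Fmap n R) x) :=
  stmt4_general n R hR0 hR2 hRne x hx
end

section
/- If 0 < R < 2 and R ≠ R_n, then the configuration space M_n(R), as a topological subspace of ℝ^{2n+2}, is path-connected. -/
open Complex Function

lemma rel_of_forall_eq_off {ι α : Type*} [Finite ι] {r : (ι → α) → (ι → α) → Prop}
    (hrefl : ∀ f, r f f) (htrans : ∀ {f g h}, r f g → r g h → r f h)
    (hstep : ∀ i f g, (∀ j ≠ i, f j = g j) → r f g) (f g : ι → α) : r f g := by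
  classical
  cases nonempty_fintype ι
  suffices ∀ s : Finset ι, r f (s.piecewise g f) by simpa using this Finset.univ
  intro s
  induction s using Finset.induction_on with
  | empty => simpa using hrefl f
  | insert i s _ ih =>
    rw [Finset.piecewise_insert]
    exact htrans ih (hstep i _ _ fun j hj => (update_of_ne hj _ _).symm)

namespace Spider

/-- For `‖v‖ = 1` and `|r| ≤ 2`, the two points at distance `1` from both `b` and `b + r v`. -/
noncomputable def elbow (b v : ℂ) (r : ℝ) (ε : ℤˣ) : ℂ :=
  b + (r / 2 + ((ε : ℤ) : ℂ) * ((√(1 - r ^ 2 / 4) : ℝ) : ℂ) * I) * v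

variable {b v J : ℂ} {r : ℝ}

lemma norm_half_add_sign_mul_I (hr : |r| ≤ 2) (ε : ℤˣ) :
    ‖(r / 2 + ((ε : ℤ) : ℂ) * ((√(1 - r ^ 2 / 4) : ℝ) : ℂ) * I : ℂ)‖ = 1 := by
  have hε : ((ε : ℤ) : ℝ) ^ 2 = 1 := by
    rw [sq]; exact_mod_cast Int.units_coe_mul_self ε
  have hs : √(1 - r ^ 2 / 4) ^ 2 = 1 - r ^ 2 / 4 :=
    Real.sq_sqrt (by nlinarith [abs_le.mp hr])
  have := norm_add_mul_I (r / 2) (((ε : ℤ) : ℝ) * √(1 - r ^ 2 / 4))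
  push_cast at this
  rw [this, mul_pow, hε, hs, ← Real.sqrt_one]
  congr 1
  ring

lemma norm_sub_elbow (hv : ‖v‖ = 1) (hr : |r| ≤ 2) (ε : ℤˣ) :
    ‖b + r * v - elbow b v r ε‖ = 1 := by
  have : b + r * v - elbow b v r ε =
      (r / 2 + (((-ε : ℤˣ) : ℤ) : ℂ) * ((√(1 - r ^ 2 / 4) : ℝ) : ℂ) * I) * v := by
    simp only [elbow, Units.val_neg, Int.cast_neg]; ring
  rw [this, norm_mul, hv, mul_one, norm_half_add_sign_mul_I hr]

lemma norm_elbow_sub (hv : ‖v‖ = 1) (hr : |r| ≤ 2) (ε : ℤˣ) : ‖elbow b v r ε - b‖ = 1 := by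
  rw [elbow, add_sub_cancel_left, norm_mul, hv, mul_one, norm_half_add_sign_mul_I hr]

lemma exists_elbow_eq (hv : ‖v‖ = 1) (hr : r ≠ 0) (h₁ : ‖b + r * v - J‖ = 1)
    (h₂ : ‖J - b‖ = 1) : ∃ ε, J = elbow b v r ε := by
  have hv0 : v ≠ 0 := by rintro rfl; simp at hv
  set w := (J - b) / v
  have hJ : J = b + w * v := by simp [w, hv0]
  have hw : w.re ^ 2 + w.im ^ 2 = 1 := by
    have := Complex.sq_norm w
    rw [show ‖w‖ = 1 by simp [w, h₂, hv], normSq_apply] at this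
    linarith
  have hrw : (r - w.re) ^ 2 + w.im ^ 2 = 1 := by
    have := Complex.sq_norm (r - w)
    rw [show ‖(r : ℂ) - w‖ = 1 by
      rw [← h₁, hJ, show b + r * v - (b + w * v) = (r - w) * v by ring, norm_mul, hv, mul_one],
      normSq_apply] at this
    simp only [sub_re, ofReal_re, sub_im, ofReal_im, zero_sub] at this
    linarith
  have hre : w.re = r / 2 := by
    have : r * (r - 2 * w.re) = 0 := by linarith
    have := (mul_eq_zero.mp this).resolve_left hr
    linarith
  have him : |w.im| = √(1 - r ^ 2 / 4) := by
    rw [← Real.sqrt_sq_eq_abs]; congr 1; rw [hre] at hw; linarith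
  refine ⟨if 0 ≤ w.im then 1 else -1, ?_⟩
  rw [hJ, elbow]
  congr 2
  apply Complex.ext <;> simp [hre]
  split_ifs with h
  · simp [← him, abs_of_nonneg h]
  · simp [← him, abs_of_neg (not_le.mp h)]

lemma elbow_two (b v : ℂ) (ε : ℤˣ) : elbow b v 2 ε = b + v := by
  norm_num [elbow]

lemma elbow_zero_one (b v : ℂ) : elbow b v 0 1 = b + I * v := by
  norm_num [elbow]

noncomputable def elbowAt (b c : ℂ) (ε : ℤˣ) : ℂ := elbow b ((c - b) / ‖c - b‖) ‖c - b‖ ε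

variable {c : ℂ}

lemma norm_div_norm_sub (hcb : c ≠ b) : ‖(c - b) / (‖c - b‖ : ℂ)‖ = 1 := by
  have : ‖c - b‖ ≠ 0 := norm_ne_zero_iff.mpr (sub_ne_zero.mpr hcb)
  rw [norm_div, norm_real, norm_norm, div_self this]

lemma eq_add_norm_mul_div (hcb : c ≠ b) : c = b + ‖c - b‖ * ((c - b) / ‖c - b‖) := by
  have : (‖c - b‖ : ℂ) ≠ 0 := by exact_mod_cast norm_ne_zero_iff.mpr (sub_ne_zero.mpr hcb)
  field_simp
  ring

lemma norm_sub_elbowAt (hcb : c ≠ b) (h2 : ‖c - b‖ ≤ 2) (ε : ℤˣ) :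
    ‖c - elbowAt b c ε‖ = 1 ∧ ‖elbowAt b c ε - b‖ = 1 := by
  have hr : |‖c - b‖| ≤ 2 := by rwa [abs_norm]
  refine ⟨?_, norm_elbow_sub (norm_div_norm_sub hcb) hr ε⟩
  have := norm_sub_elbow (b := b) (norm_div_norm_sub hcb) hr ε
  rwa [← eq_add_norm_mul_div hcb] at this

lemma exists_elbowAt_eq (hcb : c ≠ b) (h₁ : ‖c - J‖ = 1) (h₂ : ‖J - b‖ = 1) :
    ∃ ε, J = elbowAt b c ε := by
  rw [eq_add_norm_mul_div hcb] at h₁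
  exact exists_elbow_eq (norm_div_norm_sub hcb) (norm_ne_zero_iff.mpr (sub_ne_zero.mpr hcb))
    h₁ h₂

lemma elbowAt_eq_of_norm_eq_two (h : ‖c - b‖ = 2) (ε ε' : ℤˣ) :
    elbowAt b c ε = elbowAt b c ε' := by
  rw [elbowAt, elbowAt, h, elbow_two, elbow_two]

def IsArmPath (b : ℂ) (γ A : unitInterval → ℂ) : Prop :=
  Continuous A ∧ ∀ t, ‖γ t - A t‖ = 1 ∧ ‖A t - b‖ = 1

variable {γ : unitInterval → ℂ}

lemma isArmPath_elbow {r : unitInterval → ℝ} {v : unitInterval → ℂ} (hr : Continuous r)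
    (hv : Continuous v) (hv1 : ∀ t, ‖v t‖ = 1) (hγ : ∀ t, γ t = b + r t * v t)
    (h2 : ∀ t, ‖γ t - b‖ ≤ 2) (ε : ℤˣ) : IsArmPath b γ fun t => elbow b (v t) (r t) ε := by
  refine ⟨by unfold elbow; fun_prop, fun t => ?_⟩
  have hr2 : |r t| ≤ 2 := by simpa [hγ t, hv1] using h2 t
  exact ⟨hγ t ▸ norm_sub_elbow (hv1 t) hr2 ε, norm_elbow_sub (hv1 t) hr2 ε⟩

lemma isArmPath_elbowAt (hγ : Continuous γ) (hne : ∀ t, γ t ≠ b) (h2 : ∀ t, ‖γ t - b‖ ≤ 2)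
    (ε : ℤˣ) : IsArmPath b γ fun t => elbowAt b (γ t) ε := by
  have hn : ∀ t, ‖γ t - b‖ ≠ 0 := fun t => norm_ne_zero_iff.mpr (sub_ne_zero.mpr (hne t))
  refine isArmPath_elbow (by fun_prop) ?_ (fun t => norm_div_norm_sub (hne t))
    (fun t => eq_add_norm_mul_div (hne t)) h2 ε
  exact (hγ.sub continuous_const).div (by fun_prop) (fun t => by exact_mod_cast hn t)

lemma exists_isArmPath_segment {c₀ c₁ : ℂ} (hc : c₀ ≠ c₁) (h₁ : ‖c₀ - J‖ = 1) (h₂ : ‖J - b‖ = 1)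
    (hc₁ : ‖c₁ - b‖ ≤ 2) (hperp : c₀ = b → J = b + I * ((c₁ - c₀) / ‖c₁ - c₀‖)) :
    ∃ A, IsArmPath b (Path.segment c₀ c₁) A ∧ A 0 = J := by
  set γ := Path.segment c₀ c₁
  have hγ : ∀ t, γ t = c₀ + (t : ℝ) * (c₁ - c₀) := fun t => by
    simp [γ, AffineMap.lineMap_apply_module', add_comm]
  have hc₀ : ‖c₀ - b‖ ≤ 2 := by
    linarith [norm_sub_le_norm_sub_add_norm_sub c₀ J b]
  have h2 : ∀ t, ‖γ t - b‖ ≤ 2 := fun t => by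
    simpa [γ, dist_eq_norm] using (convex_closedBall b 2).lineMap_mem
      (mem_closedBall_iff_norm.mpr hc₀) (mem_closedBall_iff_norm.mpr hc₁) t.2
  by_cases hline : ∃ s : ℝ, b = c₀ + s * (c₁ - c₀)
  · -- the centre may pass over the foot: use the fixed direction and a signed distance
    obtain ⟨s, hs⟩ := hline
    set L := ‖c₁ - c₀‖
    set u := (c₁ - c₀) / L
    have hL : (L : ℂ) ≠ 0 := by exact_mod_cast norm_ne_zero_iff.mpr (sub_ne_zero.mpr hc.symm)
    have hLu : (L : ℂ) * u = c₁ - c₀ := mul_div_cancel₀ _ hL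
    have hpolar : ∀ t : unitInterval, γ t = b + (((t : ℝ) - s) * L : ℝ) * u := fun t => by
      rw [hγ, hs]; push_cast; linear_combination (s - t) * hLu
    have hu : ‖u‖ = 1 := norm_div_norm_sub hc.symm
    obtain ⟨ε, hε⟩ : ∃ ε, J = elbow b u ((0 - s) * L) ε := by
      rcases eq_or_ne s 0 with rfl | hs0
      · exact ⟨1, by simpa [elbow_zero_one, hs] using hperp (by simp [hs])⟩
      · have h0 : b + (((0 : ℝ) - s) * L : ℝ) * u = c₀ := by simpa [γ] using (hpolar 0).symm
        refine exists_elbow_eq hu (mul_ne_zero (by simpa using hs0) (by exact_mod_cast hL)) ?_ h₂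
        rwa [h0]
    exact ⟨_, isArmPath_elbow (by fun_prop) continuous_const (fun _ => hu) hpolar h2 ε,
      by simpa using hε.symm⟩
  · push Not at hline
    have hne : ∀ t, γ t ≠ b := fun t h => hline t (by rw [← h, hγ])
    obtain ⟨ε, hε⟩ := exists_elbowAt_eq (by simpa [γ] using hne 0) h₁ h₂
    exact ⟨_, isArmPath_elbowAt γ.continuous hne h2 ε, by simpa using hε.symm⟩

def spiderSpace {ι : Type*} (b : ι → ℂ) : Set (ℂ × (ι → ℂ)) :=
  {x | ∀ k, ‖x.1 - x.2 k‖ = 1 ∧ ‖x.2 k - b k‖ = 1}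

section Configurations

variable {ι : Type*} {b : ι → ℂ}

lemma joinedIn_of_isArmPath {c₀ c₁ : ℂ} (γ : Path c₀ c₁) {A : ι → unitInterval → ℂ}
    (hA : ∀ k, IsArmPath (b k) γ (A k)) :
    JoinedIn (spiderSpace b) (c₀, fun k => A k 0) (c₁, fun k => A k 1) :=
  ⟨{ toFun := fun t => (γ t, fun k => A k t)
     continuous_toFun := γ.continuous.prodMk (continuous_pi fun k => (hA k).1)
     source' := by simp
     target' := by simp }, fun t k => (hA k).2 t⟩

lemma joinedIn_of_eq_of_anchor_ne {c : ℂ} {J J' : ι → ℂ} (hJ : (c, J) ∈ spiderSpace b)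
    (hJ' : (c, J') ∈ spiderSpace b) (h : ∀ k, b k ≠ c → J k = J' k) :
    JoinedIn (spiderSpace b) (c, J) (c, J') := by
  have hA : ∀ k, ∃ A, IsArmPath (b k) (Path.refl c) A ∧ A 0 = J k ∧ A 1 = J' k := by
    intro k
    by_cases hk : b k = c
    · -- with its foot at the centre, the arm can swing round the unit circle about `b k`
      have hS := isPathConnected_sphere (by simp [rank_real_complex]) (b k) zero_le_one
      obtain ⟨A, hA⟩ :=
        hS.joinedIn (J k) (by simpa using (hJ k).2) (J' k) (by simpa using (hJ' k).2)
      refine ⟨A, ⟨A.continuous, fun t => ?_⟩, A.source, A.target⟩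
      have := mem_sphere_iff_norm.mp (hA t)
      exact ⟨by rw [Path.refl_apply, ← hk, norm_sub_rev, this], this⟩
    · exact ⟨fun _ => J k, ⟨continuous_const, fun _ => hJ k⟩, rfl, h k hk⟩
  choose A hA hA0 hA1 using hA
  simpa [hA0, hA1] using joinedIn_of_isArmPath (Path.refl c) hA

lemma exists_joinedIn_segment {c₀ c₁ : ℂ} {J : ι → ℂ} (hJ : (c₀, J) ∈ spiderSpace b)
    (hc₁ : ∀ k, ‖c₁ - b k‖ ≤ 2) : ∃ J₁, JoinedIn (spiderSpace b) (c₀, J) (c₁, J₁) := by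
  classical
  rcases eq_or_ne c₀ c₁ with rfl | hc
  · exact ⟨J, .refl hJ⟩
  set u := (c₁ - c₀) / ‖c₁ - c₀‖
  set J' := fun k => if b k = c₀ then b k + I * u else J k
  have hJ' : (c₀, J') ∈ spiderSpace b := fun k => by
    by_cases hk : b k = c₀
    · simp [J', hk, u, sub_ne_zero.mpr hc.symm]
    · simpa [J', hk] using hJ k
  have hA : ∀ k, ∃ A, IsArmPath (b k) (Path.segment c₀ c₁) A ∧ A 0 = J' k := fun k =>
    exists_isArmPath_segment hc (hJ' k).1 (hJ' k).2 (hc₁ k) (fun h => by simp [J', h.symm, u])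
  choose A hA hA0 using hA
  refine ⟨fun k => A k 1,
    (joinedIn_of_eq_of_anchor_ne hJ hJ' fun k hk => by simp [J', hk]).trans ?_⟩
  simpa [hA0] using joinedIn_of_isArmPath _ hA

lemma exists_eq_elbowAt {c : ℂ} {J : ι → ℂ} (hJ : (c, J) ∈ spiderSpace b)
    (hb : ∀ k, b k ≠ c) : ∃ ε : ι → ℤˣ, J = fun k => elbowAt (b k) c (ε k) := by
  choose ε hε using fun k => exists_elbowAt_eq (hb k).symm (hJ k).1 (hJ k).2
  exact ⟨ε, funext hε⟩

lemma joinedIn_elbowAt {c₀ c₁ : ℂ} (γ : Path c₀ c₁) (hne : ∀ t k, γ t ≠ b k)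
    (h2 : ∀ t k, ‖γ t - b k‖ ≤ 2) (ε : ι → ℤˣ) :
    JoinedIn (spiderSpace b) (c₀, fun k => elbowAt (b k) c₀ (ε k))
      (c₁, fun k => elbowAt (b k) c₁ (ε k)) := by
  simpa using joinedIn_of_isArmPath γ fun k =>
    isArmPath_elbowAt γ.continuous (hne · k) (h2 · k) (ε k)

end Configurations

section AnchorsOnCircle

variable {ι : Type*} {b : ι → ℂ} {R : ℝ}

lemma segment_zero_apply (p : ℂ) (t : unitInterval) : Path.segment 0 p t = (t : ℝ) * p := by
  simp [AffineMap.lineMap_apply_module']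

lemma joinedIn_elbowAt_zero_of_one_lt (hbR : ∀ k, ‖b k‖ = R) (hR1 : 1 < R) (hR2 : R < 2)
    (k : ι) {ε ε' : ι → ℤˣ} (h : ∀ j ≠ k, ε j = ε' j) :
    JoinedIn (spiderSpace b) (0, fun j => elbowAt (b j) 0 (ε j))
      (0, fun j => elbowAt (b j) 0 (ε' j)) := by
  -- at `p` both elbows of arm `k` coincide
  set p : ℂ := ((R - 2) / R : ℝ) * b k
  have hR0 : 0 < R := by linarith
  have hp : ∀ t : unitInterval, ‖Path.segment 0 p t‖ = t * (2 - R) := fun t => by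
    rw [segment_zero_apply, norm_mul, norm_mul, hbR, norm_real, norm_real, Real.norm_eq_abs,
      Real.norm_eq_abs, abs_of_nonneg t.2.1, abs_div, abs_of_neg (by linarith), abs_of_pos hR0]
    field_simp
    ring
  have hne : ∀ t j, Path.segment 0 p t ≠ b j := fun t j h => by
    have := hp t
    rw [h, hbR] at this
    nlinarith [t.2.2]
  have h2 : ∀ t j, ‖Path.segment 0 p t - b j‖ ≤ 2 := fun t j => by
    nlinarith [norm_sub_le (Path.segment 0 p t) (b j), hp t, hbR j, t.2.2]
  have hpk : ‖p - b k‖ = 2 := by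
    have hRC : (R : ℂ) ≠ 0 := by exact_mod_cast hR0.ne'
    rw [show p - b k = ((-2 / R : ℝ) : ℂ) * b k by simp only [p]; push_cast; field_simp; ring,
      norm_mul, norm_real, hbR, Real.norm_eq_abs, abs_div, abs_of_pos hR0]
    field_simp
    norm_num
  have hend : (fun j => elbowAt (b j) p (ε j)) = fun j => elbowAt (b j) p (ε' j) := by
    funext j
    rcases eq_or_ne j k with rfl | hj
    · exact elbowAt_eq_of_norm_eq_two hpk _ _
    · rw [h j hj]
  exact (joinedIn_elbowAt _ hne h2 ε).trans (hend ▸ (joinedIn_elbowAt _ hne h2 ε').symm)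

lemma exists_joinedIn_anchor (hb : Injective b) (hbR : ∀ k, ‖b k‖ = R) (hR0 : 0 < R)
    (hR1 : R ≤ 1) (k : ι) (ε : ι → ℤˣ) :
    ∃ J, JoinedIn (spiderSpace b) (0, fun j => elbowAt (b j) 0 (ε j)) (b k, J) ∧
      ∀ j ≠ k, J j = elbowAt (b j) (b k) (ε j) := by
  set γ := Path.segment 0 (b k)
  have hRC : (R : ℂ) ≠ 0 := by exact_mod_cast hR0.ne'
  have hγ : ∀ t, ‖γ t‖ = t * R := fun t => by
    rw [segment_zero_apply, norm_mul, norm_real, Real.norm_eq_abs, abs_of_nonneg t.2.1, hbR]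
  have h2 : ∀ t j, ‖γ t - b j‖ ≤ 2 := fun t j => by
    nlinarith [norm_sub_le (γ t) (b j), hγ t, hbR j, t.2.2]
  have hA : ∀ j, ∃ A, IsArmPath (b j) γ A ∧ A 0 = elbowAt (b j) 0 (ε j) ∧
      (j ≠ k → A 1 = elbowAt (b j) (b k) (ε j)) := by
    intro j
    rcases eq_or_ne j k with rfl | hj
    · have hpolar : ∀ t : unitInterval, γ t = b j + ((1 - t) * R : ℝ) * -(b j / R) := fun t => by
        rw [segment_zero_apply]; push_cast; field_simp; ring
      refine ⟨_, isArmPath_elbow (by fun_prop) continuous_const (fun _ => ?_) hpolar (h2 · j)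
        (ε j), ?_, fun h => (h rfl).elim⟩
      · rw [norm_neg, norm_div, hbR, norm_real, Real.norm_eq_abs, abs_of_pos hR0, div_self hR0.ne']
      · simp [elbowAt, hbR, neg_div]
    · have hne : ∀ t, γ t ≠ b j := fun t h => by
        have ht : (t : ℝ) = 1 := by
          have := hγ t
          rw [h, hbR] at this
          nlinarith
        rw [show γ t = (t : ℝ) * b k from segment_zero_apply _ _, ht] at h
        exact hj (hb (by simpa using h.symm))
      exact ⟨_, isArmPath_elbowAt γ.continuous hne (h2 · j) (ε j), by simp [γ],
        fun _ => by simp [γ]⟩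
  choose A hA hA0 hA1 using hA
  exact ⟨fun j => A j 1, by simpa [hA0] using joinedIn_of_isArmPath γ hA, hA1⟩

lemma joinedIn_elbowAt_zero_of_le_one (hb : Injective b) (hbR : ∀ k, ‖b k‖ = R) (hR0 : 0 < R)
    (hR1 : R ≤ 1) (k : ι) {ε ε' : ι → ℤˣ} (h : ∀ j ≠ k, ε j = ε' j) :
    JoinedIn (spiderSpace b) (0, fun j => elbowAt (b j) 0 (ε j))
      (0, fun j => elbowAt (b j) 0 (ε' j)) := by
  obtain ⟨J, hJ, hJk⟩ := exists_joinedIn_anchor hb hbR hR0 hR1 k ε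
  obtain ⟨J', hJ', hJ'k⟩ := exists_joinedIn_anchor hb hbR hR0 hR1 k ε'
  refine hJ.trans (.trans ?_ hJ'.symm)
  refine joinedIn_of_eq_of_anchor_ne hJ.target_mem hJ'.target_mem fun j hj => ?_
  have hjk : j ≠ k := fun h => hj (h ▸ rfl)
  rw [hJk j hjk, hJ'k j hjk, h j hjk]

end AnchorsOnCircle

theorem isPathConnected_spiderSpace {ι : Type*} [Finite ι] {b : ι → ℂ} {R : ℝ}
    (hb : Injective b) (hbR : ∀ k, ‖b k‖ = R) (hR0 : 0 < R) (hR2 : R < 2) :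
    IsPathConnected (spiderSpace b) := by
  have hb0 : ∀ k, b k ≠ 0 := fun k h => hR0.ne' (by rw [← hbR k, h, norm_zero])
  have hb2 : ∀ k, ‖0 - b k‖ ≤ 2 := fun k => by rw [zero_sub, norm_neg, hbR]; exact hR2.le
  have hmem : ∀ ε : ι → ℤˣ, ((0 : ℂ), fun j => elbowAt (b j) 0 (ε j)) ∈ spiderSpace b :=
    fun ε k => norm_sub_elbowAt (hb0 k).symm (hb2 k) (ε k)
  have hjoin : ∀ ε ε' : ι → ℤˣ, JoinedIn (spiderSpace b) (0, fun j => elbowAt (b j) 0 (ε j))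
      (0, fun j => elbowAt (b j) 0 (ε' j)) := by
    refine rel_of_forall_eq_off (fun ε => .refl (hmem ε)) .trans fun k ε ε' h => ?_
    rcases le_or_gt R 1 with hR1 | hR1
    · exact joinedIn_elbowAt_zero_of_le_one hb hbR hR0 hR1 k h
    · exact joinedIn_elbowAt_zero_of_one_lt hbR hR1 hR2 k h
  refine ⟨_, hmem 1, fun x hx => ?_⟩
  obtain ⟨J, hJ⟩ := exists_joinedIn_segment (c₁ := 0) hx hb2
  obtain ⟨ε, rfl⟩ := exists_eq_elbowAt hJ.target_mem hb0
  exact (hjoin 1 ε).trans hJ.symm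

lemma enorm2_equivRealProdCLM (z : ℂ) : enorm2 (equivRealProdCLM z) = ‖z‖ := by
  simp [enorm2, Complex.norm_def, normSq_apply, sq]

noncomputable def base (n : ℕ) (R : ℝ) (k : Fin n) : ℂ := R * exp (2 * Real.pi * I / n) ^ (k : ℕ)

lemma equivRealProdCLM_base (n : ℕ) (R : ℝ) (k : Fin n) :
    equivRealProdCLM (base n R k) = Bpt n R k := by
  have : exp (2 * Real.pi * I / n) ^ (k : ℕ) = exp ((2 * (k : ℕ) * Real.pi / n : ℝ) * I) := by
    rw [← exp_nat_mul]; push_cast; ring_nf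
  simp only [base, this, equivRealProdCLM_apply, re_ofReal_mul, im_ofReal_mul,
    exp_ofReal_mul_I_re, exp_ofReal_mul_I_im, Bpt]

lemma norm_base {n : ℕ} {R : ℝ} (hR : 0 ≤ R) (k : Fin n) : ‖base n R k‖ = R := by
  have : ‖exp (2 * Real.pi * I / n)‖ = 1 := by
    rw [show 2 * Real.pi * I / n = ((2 * Real.pi / n : ℝ) : ℂ) * I by push_cast; ring]
    exact norm_exp_ofReal_mul_I _
  rw [base, norm_mul, norm_pow, this, one_pow, mul_one, norm_real, Real.norm_of_nonneg hR]

lemma injective_base {n : ℕ} {R : ℝ} (hR : R ≠ 0) : Injective (base n R) := by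
  rcases n.eq_zero_or_pos with rfl | hn
  · exact fun k => k.elim0
  intro k j h
  have hRC : (R : ℂ) ≠ 0 := by exact_mod_cast hR
  exact Fin.ext ((isPrimitiveRoot_exp n hn.ne').pow_inj k.2 j.2 (mul_left_cancel₀ hRC h))

lemma mSpace_eq_image (n : ℕ) (R : ℝ) :
    MSpace n R = (fun x => (equivRealProdCLM x.1, fun k => equivRealProdCLM (x.2 k))) ''
      spiderSpace (base n R) := by
  have hsurj : Surjective fun x : ℂ × (Fin n → ℂ) =>
      (equivRealProdCLM x.1, fun k => equivRealProdCLM (x.2 k)) := fun y =>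
    ⟨(equivRealProdCLM.symm y.1, fun k => equivRealProdCLM.symm (y.2 k)), by simp⟩
  rw [← Set.image_preimage_eq (MSpace n R) hsurj]
  congr 1
  ext x
  refine forall_congr' fun k => ?_
  rw [← equivRealProdCLM_base, ← map_sub, ← map_sub, enorm2_equivRealProdCLM,
    enorm2_equivRealProdCLM]

end Spider

theorem stmt6_general (n : ℕ) (R : ℝ) (hR0 : 0 < R) (hR2 : R < 2) :
    IsPathConnected (MSpace n R) := by
  rw [Spider.mSpace_eq_image]
  exact (Spider.isPathConnected_spiderSpace (Spider.injective_base hR0.ne')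
    (Spider.norm_base hR0.le) hR0 hR2).image (by fun_prop)

/-- If `0 < R < 2` and `R ≠ R_n`, the configuration space `M_n(R)` is
path-connected (as a subspace of `ℝ^{2n+2}`). -/
theorem stmt6 (n : ℕ) (hn : 2 ≤ n) (R : ℝ) (hR0 : 0 < R) (hR2 : R < 2)
    (hRne : R ≠ Rcrit n) :
    IsPathConnected (MSpace n R) :=
  stmt6_general n R hR0 hR2
end

section
/- For R = 0 (so that B_1 = ⋯ = B_n = (0,0)), let M'_n(0) = {(C, J_1, …, J_n) ∈ M_n(0) : J_1 = (1,0)}, with the subspace topology. For θ ∈ ℝ let ρ_θ : ℝ² → ℝ² denote rotation about the origin by angle θ. Then the map Φ : S¹ × M'_n(0) → M_n(0) defined by Φ(e^{iθ}, (C, J_1, …, J_n)) = (ρ_θ C, ρ_θ J_1, …, ρ_θ J_n) is well defined and is a homeomorphism; in particular M_n(0) is homeomorphic to the product S¹ × M'_n(0). -/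
/-- Rotation of the plane `ℝ²` by a unit complex number `z = e^{iθ}`. -/
noncomputable def rotPt (z : Circle) (v : ℝ × ℝ) : ℝ × ℝ :=
  ((z : ℂ).re * v.1 - (z : ℂ).im * v.2, (z : ℂ).im * v.1 + (z : ℂ).re * v.2)

/-! Since all feet sit at the origin, the circle acts on `M_n(0)` by rotating every point, and
the direction of the first joint `J_1` is a continuous equivariant map `M_n(0) → S¹`. Any space
with a continuous equivariant map `f` to the acting group is the product of the group with the
fibre `f⁻¹(1)`, via `x ↦ (f x, (f x)⁻¹ • x)`; here that fibre is `M'_n(0)`. -/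

section Slice

variable {G X : Type*} [Group G] [TopologicalSpace G] [ContinuousInv G]
  [TopologicalSpace X] [MulAction G X] [ContinuousSMul G X]

def Homeomorph.prodSliceOfEquivariant (S : Set X) (hS : ∀ g : G, ∀ x ∈ S, g • x ∈ S)
    (f : S → G) (hf : Continuous f)
    (hf_smul : ∀ (g : G) (x : S), f ⟨g • x.1, hS g x.1 x.2⟩ = g * f x)
    (P : X → Prop) (hP : ∀ x : S, P x ↔ f x = 1) :
    G × {x // x ∈ S ∧ P x} ≃ₜ S where
  toFun p := ⟨p.1 • p.2.1, hS p.1 p.2.1 p.2.2.1⟩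
  invFun y := (f y, ⟨(f y)⁻¹ • y.1, hS _ y.1 y.2,
    (hP ⟨_, hS _ y.1 y.2⟩).2 (by rw [hf_smul, inv_mul_cancel])⟩)
  left_inv := by
    rintro ⟨g, x, hxS, hxP⟩
    have hfx : f ⟨g • x, hS g x hxS⟩ = g := by
      rw [hf_smul g ⟨x, hxS⟩, (hP ⟨x, hxS⟩).1 hxP, mul_one]
    ext
    · exact hfx
    · simp only [hfx, inv_smul_smul]
  right_inv y := Subtype.ext (smul_inv_smul (f y) y.1)
  continuous_toFun := by fun_prop
  continuous_invFun :=
    hf.prodMk (Continuous.subtype_mk (hf.inv.smul continuous_subtype_val) _)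

end Slice

noncomputable instance : DistribMulAction Circle (ℝ × ℝ) where
  smul := rotPt
  one_smul v := by
    change rotPt 1 v = v
    simp [rotPt]
  mul_smul z w v := by
    change rotPt (z * w) v = rotPt z (rotPt w v)
    ext <;> simp only [rotPt, Circle.coe_mul, Complex.mul_re, Complex.mul_im] <;> ring
  smul_zero z := by
    change rotPt z 0 = 0
    simp [rotPt]
  smul_add z v w := by
    change rotPt z (v + w) = rotPt z v + rotPt z w
    ext <;> simp only [rotPt, Prod.fst_add, Prod.snd_add] <;> ring

lemma circle_smul_eq_rotPt (z : Circle) (v : ℝ × ℝ) : z • v = rotPt z v := rfl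

instance : ContinuousSMul Circle (ℝ × ℝ) where
  continuous_smul := by
    simp only [circle_smul_eq_rotPt, rotPt]
    fun_prop

lemma Complex.equivRealProd_symm_circle_smul (z : Circle) (v : ℝ × ℝ) :
    Complex.equivRealProd.symm (z • v) = z * Complex.equivRealProd.symm v := by
  apply Complex.ext <;> simp [circle_smul_eq_rotPt, rotPt, add_comm]

lemma norm_equivRealProd_symm (v : ℝ × ℝ) : ‖Complex.equivRealProd.symm v‖ = enorm2 v := by
  simp [enorm2, Complex.norm_def, Complex.normSq_apply, sq]

lemma enorm2_circle_smul (z : Circle) (v : ℝ × ℝ) : enorm2 (z • v) = enorm2 v := by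
  rw [← norm_equivRealProd_symm, ← norm_equivRealProd_symm,
    Complex.equivRealProd_symm_circle_smul, norm_mul, Circle.norm_coe, one_mul]

lemma Bpt_zero (n : ℕ) : Bpt n 0 = 0 := by
  ext k <;> simp [Bpt]

namespace MSpace

variable {n : ℕ}

lemma mem_zero_iff {x : (ℝ × ℝ) × (Fin n → ℝ × ℝ)} :
    x ∈ MSpace n 0 ↔ ∀ k, enorm2 (x.1 - x.2 k) = 1 ∧ enorm2 (x.2 k) = 1 := by
  simp [MSpace, Bpt_zero]

lemma circle_smul_mem_zero (z : Circle) {x : (ℝ × ℝ) × (Fin n → ℝ × ℝ)}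
    (hx : x ∈ MSpace n 0) : z • x ∈ MSpace n 0 := by
  rw [mem_zero_iff] at hx ⊢
  intro k
  simpa only [Prod.smul_fst, Prod.smul_snd, Pi.smul_apply, ← smul_sub, enorm2_circle_smul]
    using hx k

noncomputable def jointDir (k : Fin n) (x : MSpace n 0) : Circle :=
  ⟨Complex.equivRealProd.symm (x.1.2 k), by
    rw [Submonoid.unitSphere, Submonoid.mem_mk, Subsemigroup.mem_mk, mem_sphere_zero_iff_norm,
      norm_equivRealProd_symm]
    exact ((mem_zero_iff.1 x.2) k).2⟩

lemma continuous_jointDir (k : Fin n) : Continuous (jointDir k) := by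
  refine Continuous.subtype_mk ?_ _
  simp only [Complex.equivRealProd_symm_apply]
  fun_prop

lemma jointDir_smul (k : Fin n) (z : Circle) (x : MSpace n 0) :
    jointDir k ⟨z • x.1, circle_smul_mem_zero z x.2⟩ = z * jointDir k x :=
  Circle.ext (Complex.equivRealProd_symm_circle_smul z _)

lemma jointDir_eq_one_iff (k : Fin n) (x : MSpace n 0) :
    jointDir k x = 1 ↔ x.1.2 k = (1, 0) := by
  rw [Circle.ext_iff, Circle.coe_one, jointDir, ← Equiv.eq_symm_apply]
  rfl

end MSpace

/-- For `R = 0` (all endpoints at the origin), let `M'_n(0)` be the subspace of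
`M_n(0)` where `J_1 = (1,0)`. Then the map
`Φ(e^{iθ}, (C, J_1, …, J_n)) = (ρ_θ C, ρ_θ J_1, …, ρ_θ J_n)` is well defined and a
homeomorphism `S¹ × M'_n(0) ≃ M_n(0)`. -/
theorem stmt9 (n : ℕ) (hn : 2 ≤ n) :
    ∃ e : (Circle ×
        {x : (ℝ × ℝ) × (Fin n → ℝ × ℝ) //
          x ∈ MSpace n 0 ∧ x.2 ⟨0, by omega⟩ = ((1 : ℝ), (0 : ℝ))}) ≃ₜ
        (MSpace n 0),
      ∀ (z : Circle)
        (x : {x : (ℝ × ℝ) × (Fin n → ℝ × ℝ) //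
          x ∈ MSpace n 0 ∧ x.2 ⟨0, by omega⟩ = ((1 : ℝ), (0 : ℝ))}),
        ((e (z, x) : (ℝ × ℝ) × (Fin n → ℝ × ℝ))) =
          (rotPt z x.val.1, fun k => rotPt z (x.val.2 k)) :=
  ⟨Homeomorph.prodSliceOfEquivariant (MSpace n 0) (fun z _ => MSpace.circle_smul_mem_zero z)
      (MSpace.jointDir ⟨0, by omega⟩) (MSpace.continuous_jointDir _) (MSpace.jointDir_smul _)
      (fun x => x.2 ⟨0, by omega⟩ = (1, 0)) (fun x => (MSpace.jointDir_eq_one_iff _ x).symm),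
    fun _ _ => rfl⟩
end

section
/- Suppose 0 < R < 2, R ≠ R_n, and x = (C, J_1, …, J_n) ∈ M_n(R) has two adjacent arms stretched out: a_k = b_k and a_{k+1} = b_{k+1} for some k (indices mod n). Then neither stretched-out arm is parallel to the x-axis or to the y-axis; that is, both coordinates of a_k are nonzero and both coordinates of a_{k+1} are nonzero. -/
open Real

lemma abs_sin_int_mul_pi_add (q : ℤ) (x : ℝ) : |Real.sin (q * π + x)| = |Real.sin x| := by
  have h : (q:ℝ) * π + x = q * π - (-x) := by ring
  rw [h, Real.sin_int_mul_pi_sub, Real.sin_neg]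
  rcases Int.even_or_odd q with hq | hq
  · rw [hq.neg_one_zpow]; simp
  · rw [hq.neg_one_zpow]; simp

lemma lemS (n : ℕ) (hn : 2 ≤ n) (j : ℤ)
    (h : |Real.sin (j * π / (2 * n))| < Real.sin (π / n)) :
    (Real.sin (j * π / (2 * n)) = 0 ∧ ∃ q : ℤ, j = 2 * n * q) ∨
    (|Real.sin (j * π / (2 * n))| = Real.sin (π / (2 * n)) ∧
      ∃ q : ℤ, j = 2 * n * q + 1 ∨ j = 2 * n * q - 1) := by
  have hn0 : 0 < n := by omega
  have hnR : (0:ℝ) < (n:ℝ) := by exact_mod_cast hn0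
  have hπ : (0:ℝ) < π := Real.pi_pos
  obtain ⟨q, d, hdn, hjd⟩ :
      ∃ (q : ℤ) (d : ℕ), d ≤ n ∧ (j = 2*n*q + d ∨ j = 2*n*q - d) := by
    have h2n : (0:ℤ) < 2*(n:ℤ) := by positivity
    have hj : 2*(n:ℤ) * (j / (2*(n:ℤ))) + j % (2*(n:ℤ)) = j := Int.mul_ediv_add_emod j (2*n)
    have hr0 : 0 ≤ j % (2*(n:ℤ)) := Int.emod_nonneg _ (by omega)
    have hr1 : j % (2*(n:ℤ)) < 2*(n:ℤ) := Int.emod_lt_of_pos _ h2n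
    set Q := j / (2*(n:ℤ)) with hQ
    set r := j % (2*(n:ℤ)) with hr
    by_cases hc : r ≤ (n:ℤ)
    · refine ⟨Q, r.toNat, by omega, Or.inl ?_⟩
      rw [Int.toNat_of_nonneg hr0]; linarith
    · refine ⟨Q + 1, (2*(n:ℤ) - r).toNat, by omega, Or.inr ?_⟩
      rw [Int.toNat_of_nonneg (by omega)]
      have : 2*(n:ℤ)*(Q+1) = 2*(n:ℤ)*Q + 2*(n:ℤ) := by ring
      linarith
  have hds : |Real.sin (j*π/(2*n))| = Real.sin ((d:ℝ)*π/(2*n)) := by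
    have habs : |Real.sin ((j:ℝ)*π/(2*n))| = |Real.sin ((d:ℝ)*π/(2*n))| := by
      rcases hjd with hjd | hjd
      · have e : (j:ℝ)*π/(2*n) = (q:ℝ)*π + (d:ℝ)*π/(2*n) := by
          have : (j:ℝ) = 2*(n:ℝ)*(q:ℝ) + (d:ℝ) := by exact_mod_cast congrArg (Int.cast : ℤ → ℝ) hjd
          rw [this]; field_simp
        rw [e, abs_sin_int_mul_pi_add]
      · have e : (j:ℝ)*π/(2*n) = (q:ℝ)*π + (-((d:ℝ)*π/(2*n))) := by
          have : (j:ℝ) = 2*(n:ℝ)*(q:ℝ) - (d:ℝ) := by exact_mod_cast congrArg (Int.cast : ℤ → ℝ) hjd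
          rw [this]; field_simp; ring
        rw [e, abs_sin_int_mul_pi_add, Real.sin_neg, abs_neg]
    rw [habs, abs_of_nonneg]
    apply Real.sin_nonneg_of_nonneg_of_le_pi (by positivity)
    rw [div_le_iff₀ (by positivity)]
    have : (d:ℝ) ≤ (n:ℝ) := by exact_mod_cast hdn
    nlinarith
  have hdhalf : (d:ℝ)*π/(2*n) ≤ π/2 := by
    rw [div_le_div_iff₀ (by positivity) (by norm_num)]
    have : (d:ℝ) ≤ (n:ℝ) := by exact_mod_cast hdn
    nlinarith
  have hmem : (d:ℝ)*π/(2*(n:ℝ)) ∈ Set.Icc (-(π/2)) (π/2) := by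
    constructor
    · have : (0:ℝ) ≤ (d:ℝ)*π/(2*n) := by positivity
      linarith
    · exact hdhalf
  have hmem2 : π/(n:ℝ) ∈ Set.Icc (-(π/2)) (π/2) := by
    constructor
    · have : (0:ℝ) ≤ π/(n:ℝ) := by positivity
      linarith
    · rw [div_le_div_iff₀ hnR (by norm_num)]
      have : (2:ℝ) ≤ (n:ℝ) := by exact_mod_cast hn
      nlinarith
  have hlt : (d:ℝ)*π/(2*(n:ℝ)) < π/(n:ℝ) :=
    (Real.strictMonoOn_sin.lt_iff_lt hmem hmem2).mp (by rw [← hds]; exact h)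
  have hd2 : d < 2 := by
    by_contra hge
    push_neg at hge
    have h2d : (2:ℝ) ≤ (d:ℝ) := by exact_mod_cast hge
    rw [div_lt_div_iff₀ (by positivity) hnR] at hlt
    nlinarith [mul_nonneg (mul_nonneg (sub_nonneg.mpr h2d) hπ.le) hnR.le]
  interval_cases d
  · left
    constructor
    · have : |Real.sin ((j:ℝ)*π/(2*n))| = 0 := by simpa using hds
      exact abs_eq_zero.mp this
    · exact ⟨q, by rcases hjd with hjd | hjd <;> omega⟩
  · right
    constructor
    · simpa using hds
    · exact ⟨q, by rcases hjd with hjd | hjd <;> [left; right] <;> omega⟩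

lemma Rcrit_odd (n : ℕ) (hn : 2 ≤ n) (hodd : ¬ Even n) :
    Rcrit n = 1 / Real.cos (π / (2*n)) := by
  have hn0 : 0 < n := by omega
  have hnR : (0:ℝ) < (n:ℝ) := by exact_mod_cast hn0
  have hπ := Real.pi_pos
  obtain ⟨m, hm⟩ : ∃ m, n = 2*m+1 := by
    rcases Nat.even_or_odd n with h | ⟨m, hm⟩
    · exact absurd h hodd
    · exact ⟨m, hm⟩
  have hdiv : (n/2 : ℕ) = m := by omega
  have hang : 2 * ((n / 2 : ℕ) : ℝ) * π / (n : ℝ) = π - π/(n:ℝ) := by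
    rw [hdiv]
    have hcast : (n:ℝ) = 2*(m:ℝ)+1 := by exact_mod_cast hm
    rw [hcast]
    have : (2*(m:ℝ)+1) ≠ 0 := by positivity
    field_simp
    ring
  have hcos : Real.cos (π/(n:ℝ)) = 2 * Real.cos (π/(2*(n:ℝ)))^2 - 1 := by
    have e : π/(n:ℝ) = 2*(π/(2*(n:ℝ))) := by field_simp
    rw [e, Real.cos_two_mul]
  have hcpos : 0 < Real.cos (π/(2*(n:ℝ))) := by
    apply Real.cos_pos_of_mem_Ioo
    constructor
    · have : (0:ℝ) < π/(2*(n:ℝ)) := by positivity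
      linarith
    · rw [div_lt_div_iff₀ (by positivity) (by norm_num)]
      have h2 : (2:ℝ) ≤ (n:ℝ) := by exact_mod_cast hn
      nlinarith
  unfold Rcrit dmax
  rw [if_neg hodd, hang, Real.cos_pi_sub, hcos]
  have h4 : 2 - 2*(-(2 * Real.cos (π/(2*(n:ℝ)))^2 - 1)) = (2*Real.cos (π/(2*(n:ℝ))))^2 := by
    ring
  rw [h4, Real.sqrt_sq (by positivity)]
  rw [div_eq_div_iff (by positivity) hcpos.ne']
  ring

lemma lemL1 (n : ℕ) (hn : 2 ≤ n) (R : ℝ) (hR0 : 0 < R) (hR2 : R < 2)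
    (hRne : R ≠ Rcrit n) (K : ℤ)
    (h : |Real.cos ((2*(K:ℝ)+1) * π / n)| = R * Real.sin (π / n) / 2) : False := by
  have hn0 : 0 < n := by omega
  have hnR : (0:ℝ) < (n:ℝ) := by exact_mod_cast hn0
  have hπ := Real.pi_pos
  have hs : 0 < Real.sin (π/(n:ℝ)) := by
    apply Real.sin_pos_of_pos_of_lt_pi (by positivity)
    rw [div_lt_iff₀ hnR]
    have h2 : (2:ℝ) ≤ (n:ℝ) := by exact_mod_cast hn
    nlinarith
  set j : ℤ := (n:ℤ) - 4*K - 2 with hj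
  have hcs : Real.cos ((2*(K:ℝ)+1) * π / n) = Real.sin ((j:ℝ) * π / (2*n)) := by
    rw [← Real.sin_pi_div_two_sub]
    congr 1
    push_cast [hj]
    field_simp
    ring
  rw [hcs] at h
  have hlt : |Real.sin ((j:ℝ) * π / (2*n))| < Real.sin (π/(n:ℝ)) := by
    rw [h]; nlinarith
  rcases lemS n hn j hlt with ⟨h0, q, hq⟩ | ⟨heq, q, hq⟩
  · rw [h0, abs_zero] at h
    nlinarith
  · have hodd : ¬ Even n := by
      have hw : ∃ w : ℤ, j = 2*w + 1 ∨ j = 2*w - 1 := by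
        rcases hq with hq | hq
        · exact ⟨(n:ℤ)*q, Or.inl (by linear_combination hq)⟩
        · exact ⟨(n:ℤ)*q, Or.inr (by linear_combination hq)⟩
      obtain ⟨w, hw⟩ := hw
      intro ⟨t, ht⟩
      have hnz : (n:ℤ) = t + t := by exact_mod_cast ht
      omega
    rw [heq] at h
    have hsin2 : Real.sin (π/(n:ℝ)) = 2 * Real.sin (π/(2*(n:ℝ))) * Real.cos (π/(2*(n:ℝ))) := by
      have e : π/(n:ℝ) = 2*(π/(2*(n:ℝ))) := by
        field_simp
      rw [e, Real.sin_two_mul]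
    have hspos : 0 < Real.sin (π/(2*(n:ℝ))) := by
      apply Real.sin_pos_of_pos_of_lt_pi (by positivity)
      rw [div_lt_iff₀ (by positivity)]
      have h2 : (2:ℝ) ≤ (n:ℝ) := by exact_mod_cast hn
      nlinarith
    have hcpos : 0 < Real.cos (π/(2*(n:ℝ))) := by
      apply Real.cos_pos_of_mem_Ioo
      constructor
      · have : (0:ℝ) < π/(2*(n:ℝ)) := by positivity
        linarith
      · rw [div_lt_div_iff₀ (by positivity) (by norm_num)]
        have h2 : (2:ℝ) ≤ (n:ℝ) := by exact_mod_cast hn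
        nlinarith
    apply hRne
    rw [Rcrit_odd n hn hodd]
    rw [hsin2] at h
    rw [eq_div_iff hcpos.ne']
    nlinarith

lemma lemL2 (n : ℕ) (hn : 2 ≤ n) (R : ℝ) (hR0 : 0 < R) (hR2 : R < 2) (K : ℤ)
    (h : |Real.sin ((2*(K:ℝ)+1) * π / n)| = R * Real.sin (π / n) / 2) : False := by
  have hn0 : 0 < n := by omega
  have hnR : (0:ℝ) < (n:ℝ) := by exact_mod_cast hn0
  have hπ := Real.pi_pos
  have hs : 0 < Real.sin (π/(n:ℝ)) := by
    apply Real.sin_pos_of_pos_of_lt_pi (by positivity)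
    rw [div_lt_iff₀ hnR]
    have h2 : (2:ℝ) ≤ (n:ℝ) := by exact_mod_cast hn
    nlinarith
  set j : ℤ := 4*K + 2 with hj
  have hcs : Real.sin ((2*(K:ℝ)+1) * π / n) = Real.sin ((j:ℝ) * π / (2*n)) := by
    congr 1
    push_cast [hj]
    field_simp
    ring
  rw [hcs] at h
  have hlt : |Real.sin ((j:ℝ) * π / (2*n))| < Real.sin (π/(n:ℝ)) := by
    rw [h]; nlinarith
  rcases lemS n hn j hlt with ⟨h0, q, hq⟩ | ⟨heq, q, hq⟩
  · rw [h0, abs_zero] at h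
    nlinarith
  · have hw : ∃ w : ℤ, j = 2*w + 1 ∨ j = 2*w - 1 := by
      rcases hq with hq | hq
      · exact ⟨(n:ℤ)*q, Or.inl (by linear_combination hq)⟩
      · exact ⟨(n:ℤ)*q, Or.inr (by linear_combination hq)⟩
    obtain ⟨w, hw⟩ := hw
    omega

lemma abs_helper (s w u : ℝ) (hs : 0 ≤ s) (hu : u^2 = 1) (h : s = 2*u*w) : |w| = s/2 := by
  have hcases : u = 1 ∨ u = -1 := by
    have h0 : (u-1)*(u+1) = 0 := by linear_combination hu
    rcases mul_eq_zero.mp h0 with h' | h'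
    · left; linarith
    · right; linarith
  rcases hcases with h' | h' <;> subst h'
  · have hw : w = s/2 := by linarith
    rw [hw, abs_of_nonneg (by linarith)]
  · have hw : w = -(s/2) := by linarith
    rw [hw, abs_neg, abs_of_nonneg (by linarith)]

lemma core (n : ℕ) (hn : 2 ≤ n) (R : ℝ) (hR0 : 0 < R) (hR2 : R < 2)
    (hRne : R ≠ Rcrit n) (K : ℤ) (C1 C2 a1 a2 b1 b2 : ℝ)
    (ha : a1^2 + a2^2 = 1) (hb : b1^2 + b2^2 = 1)
    (hA1 : C1 - R * Real.cos (2*(K:ℝ)*Real.pi/(n:ℝ)) = 2*a1)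
    (hA2 : C2 - R * Real.sin (2*(K:ℝ)*Real.pi/(n:ℝ)) = 2*a2)
    (hB1 : C1 - R * Real.cos ((2*(K:ℝ)+2)*Real.pi/(n:ℝ)) = 2*b1)
    (hB2 : C2 - R * Real.sin ((2*(K:ℝ)+2)*Real.pi/(n:ℝ)) = 2*b2) :
    a1 ≠ 0 ∧ a2 ≠ 0 ∧ b1 ≠ 0 ∧ b2 ≠ 0 := by
  have hn0 : 0 < n := by omega
  have hnR : (0:ℝ) < (n:ℝ) := by exact_mod_cast hn0
  have h2n : (2:ℝ) ≤ (n:ℝ) := by exact_mod_cast hn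
  have hπ := Real.pi_pos
  have hsψ : 0 < Real.sin (Real.pi/(n:ℝ)) := by
    apply Real.sin_pos_of_pos_of_lt_pi (by positivity)
    rw [div_lt_iff₀ hnR]
    nlinarith
  have hθeq : 2*(K:ℝ)*Real.pi/(n:ℝ) = (2*(K:ℝ)+1)*Real.pi/(n:ℝ) - Real.pi/(n:ℝ) := by
    ring
  have hθ₂eq : (2*(K:ℝ)+2)*Real.pi/(n:ℝ) = (2*(K:ℝ)+1)*Real.pi/(n:ℝ) + Real.pi/(n:ℝ) := by
    ring
  rw [hθeq] at hA1 hA2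
  rw [hθ₂eq] at hB1 hB2
  set ψ := Real.pi/(n:ℝ) with hψdef
  set φ := (2*(K:ℝ)+1)*Real.pi/(n:ℝ) with hφdef
  rw [Real.cos_sub] at hA1
  rw [Real.sin_sub] at hA2
  rw [Real.cos_add] at hB1
  rw [Real.sin_add] at hB2
  have pyφ := Real.sin_sq_add_cos_sq φ
  have hperp : C2 * Real.cos φ - C1 * Real.sin φ = 0 := by
    have d1 : a1 - b1 + R*Real.sin φ*Real.sin ψ = 0 := by linarith
    have d2 : a2 - b2 - R*Real.cos φ*Real.sin ψ = 0 := by linarith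
    have s1 : a1 + b1 - C1 + R*Real.cos φ*Real.cos ψ = 0 := by linarith
    have s2 : a2 + b2 - C2 + R*Real.sin φ*Real.cos ψ = 0 := by linarith
    have hd2 : (R*Real.sin ψ)*(C2*Real.cos φ - C1*Real.sin φ) = 0 := by
      linear_combination (ha - hb) - (a1+b1)*d1 - (a2+b2)*d2 +
        (R*Real.sin φ*Real.sin ψ)*s1 - (R*Real.cos φ*Real.sin ψ)*s2
    rcases mul_eq_zero.mp hd2 with h' | h'
    · exact absurd h' (by positivity)
    · exact h'
  refine ⟨fun h0 => ?_, fun h0 => ?_, fun h0 => ?_, fun h0 => ?_⟩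
  · -- a1 = 0 : arm k vertical
    have hu : a2^2 = 1 := by linear_combination ha - a1*h0
    have key : R*Real.sin ψ = 2*a2*Real.cos φ := by
      linear_combination (-1)*hperp + (Real.cos φ)*hA2 - (Real.sin φ)*hA1 -
        (R*Real.sin ψ)*pyφ - (2*Real.sin φ)*h0
    have habs : |Real.cos φ| = R*Real.sin ψ/2 :=
      abs_helper _ _ _ (by positivity) hu key
    rw [hφdef, hψdef] at habs
    exact lemL1 n hn R hR0 hR2 hRne K habs
  · -- a2 = 0 : arm k horizontal
    have hu : (-a1)^2 = 1 := by linear_combination ha - a2*h0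
    have key : R*Real.sin ψ = 2*(-a1)*Real.sin φ := by
      linear_combination (-1)*hperp + (Real.cos φ)*hA2 - (Real.sin φ)*hA1 -
        (R*Real.sin ψ)*pyφ + (2*Real.cos φ)*h0
    have habs : |Real.sin φ| = R*Real.sin ψ/2 :=
      abs_helper _ _ _ (by positivity) hu key
    rw [hφdef, hψdef] at habs
    exact lemL2 n hn R hR0 hR2 K habs
  · -- b1 = 0 : arm k' vertical
    have hu : (-b2)^2 = 1 := by linear_combination hb - b1*h0
    have key : R*Real.sin ψ = 2*(-b2)*Real.cos φ := by
      linear_combination hperp - (Real.cos φ)*hB2 + (Real.sin φ)*hB1 -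
        (R*Real.sin ψ)*pyφ + (2*Real.sin φ)*h0
    have habs : |Real.cos φ| = R*Real.sin ψ/2 :=
      abs_helper _ _ _ (by positivity) hu key
    rw [hφdef, hψdef] at habs
    exact lemL1 n hn R hR0 hR2 hRne K habs
  · -- b2 = 0 : arm k' horizontal
    have hu : b1^2 = 1 := by linear_combination hb - b2*h0
    have key : R*Real.sin ψ = 2*b1*Real.sin φ := by
      linear_combination hperp - (Real.cos φ)*hB2 + (Real.sin φ)*hB1 -
        (R*Real.sin ψ)*pyφ - (2*Real.cos φ)*h0
    have habs : |Real.sin φ| = R*Real.sin ψ/2 :=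
      abs_helper _ _ _ (by positivity) hu key
    rw [hφdef, hψdef] at habs
    exact lemL2 n hn R hR0 hR2 K habs

/-- Suppose `0 < R < 2`, `R ≠ R_n`, and `x ∈ M_n(R)` has two adjacent arms
stretched out (`a_k = b_k` and `a_{k+1} = b_{k+1}`, indices mod `n`). Then neither
stretched-out arm is parallel to the x-axis or the y-axis: both coordinates of
`a_k` and of `a_{k+1}` are nonzero. -/
theorem stmt12 (n : ℕ) (hn : 2 ≤ n) (R : ℝ) (hR0 : 0 < R) (hR2 : R < 2)
    (hRne : R ≠ Rcrit n)
    (x : (ℝ × ℝ) × (Fin n → ℝ × ℝ)) (hx : x ∈ MSpace n R)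
    (k k' : Fin n) (hk' : (k' : ℕ) = ((k : ℕ) + 1) % n)
    (h1 : x.1 - x.2 k = x.2 k - Bpt n R k)
    (h2 : x.1 - x.2 k' = x.2 k' - Bpt n R k') :
    (x.1 - x.2 k).1 ≠ 0 ∧ (x.1 - x.2 k).2 ≠ 0 ∧
      (x.1 - x.2 k').1 ≠ 0 ∧ (x.1 - x.2 k').2 ≠ 0 := by
  have hfs : ∀ (p q : ℝ×ℝ), (p - q).1 = p.1 - q.1 := fun p q => rfl
  have hss : ∀ (p q : ℝ×ℝ), (p - q).2 = p.2 - q.2 := fun p q => rfl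
  have hx' : ∀ j : Fin n, enorm2 (x.1 - x.2 j) = 1 ∧ enorm2 (x.2 j - Bpt n R j) = 1 := hx
  have hnorm : ∀ j : Fin n, (x.1 - x.2 j).1^2 + (x.1 - x.2 j).2^2 = 1 := by
    intro j
    have h' := (hx' j).1
    unfold enorm2 at h'
    exact Real.sqrt_eq_one.mp h'
  -- angle identities for k'
  have hK1 : ((k.val : ℤ) : ℝ) = (k.val : ℝ) := by push_cast; ring
  have hcos2 : Real.cos (2 * (k'.val : ℝ) * Real.pi / (n:ℝ)) =
      Real.cos ((2*((k.val:ℤ):ℝ)+2)*Real.pi/(n:ℝ)) ∧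
      Real.sin (2 * (k'.val : ℝ) * Real.pi / (n:ℝ)) =
      Real.sin ((2*((k.val:ℤ):ℝ)+2)*Real.pi/(n:ℝ)) := by
    rcases Nat.lt_or_ge (k.val+1) n with hlt | hge
    · have hk'' : (k'.val : ℝ) = (k.val:ℝ) + 1 := by
        rw [hk', Nat.mod_eq_of_lt hlt]; push_cast; ring
      have hang : 2 * (k'.val : ℝ) * Real.pi / (n:ℝ) =
          (2*((k.val:ℤ):ℝ)+2)*Real.pi/(n:ℝ) := by
        rw [hk'', hK1]; ring
      rw [hang]
      exact ⟨rfl, rfl⟩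
    · have hkn : k.val + 1 = n := by have := k.isLt; omega
      have hk0 : k'.val = 0 := by rw [hk', hkn, Nat.mod_self]
      have hang1 : 2 * (k'.val : ℝ) * Real.pi / (n:ℝ) = 0 := by
        rw [hk0]; simp
      have hang2 : (2*((k.val:ℤ):ℝ)+2)*Real.pi/(n:ℝ) = 2*Real.pi := by
        have hnR : (0:ℝ) < (n:ℝ) := by
          have : 0 < n := by omega
          exact_mod_cast this
        have hof : ((k.val:ℤ):ℝ) = (n:ℝ) - 1 := by
          have : (k.val:ℝ) + 1 = (n:ℝ) := by exact_mod_cast hkn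
          rw [hK1]; linarith
        rw [hof]
        field_simp
        ring
      rw [hang1, hang2]
      constructor
      · rw [Real.cos_zero, Real.cos_two_pi]
      · rw [Real.sin_zero, Real.sin_two_pi]
  -- component equations
  have h1f := congrArg Prod.fst h1
  have h1s := congrArg Prod.snd h1
  have h2f := congrArg Prod.fst h2
  have h2s := congrArg Prod.snd h2
  rw [hfs, hfs] at h1f
  rw [hss, hss] at h1s
  rw [hfs, hfs] at h2f
  rw [hss, hss] at h2s
  have hBk1 : (Bpt n R k).1 = R * Real.cos (2*((k.val:ℤ):ℝ)*Real.pi/(n:ℝ)) := by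
    show R * Real.cos (2 * (k.val : ℝ) * Real.pi / (n : ℝ)) = _
    rw [hK1]
  have hBk2 : (Bpt n R k).2 = R * Real.sin (2*((k.val:ℤ):ℝ)*Real.pi/(n:ℝ)) := by
    show R * Real.sin (2 * (k.val : ℝ) * Real.pi / (n : ℝ)) = _
    rw [hK1]
  have hBk'1 : (Bpt n R k').1 = R * Real.cos ((2*((k.val:ℤ):ℝ)+2)*Real.pi/(n:ℝ)) := by
    show R * Real.cos (2 * (k'.val : ℝ) * Real.pi / (n : ℝ)) = _
    rw [hcos2.1]
  have hBk'2 : (Bpt n R k').2 = R * Real.sin ((2*((k.val:ℤ):ℝ)+2)*Real.pi/(n:ℝ)) := by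
    show R * Real.sin (2 * (k'.val : ℝ) * Real.pi / (n : ℝ)) = _
    rw [hcos2.2]
  rw [hBk1] at h1f
  rw [hBk2] at h1s
  rw [hBk'1] at h2f
  rw [hBk'2] at h2s
  have hA1 : x.1.1 - R * Real.cos (2*((k.val:ℤ):ℝ)*Real.pi/(n:ℝ)) = 2*(x.1 - x.2 k).1 := by
    rw [hfs]; linarith
  have hA2 : x.1.2 - R * Real.sin (2*((k.val:ℤ):ℝ)*Real.pi/(n:ℝ)) = 2*(x.1 - x.2 k).2 := by
    rw [hss]; linarith
  have hB1 : x.1.1 - R * Real.cos ((2*((k.val:ℤ):ℝ)+2)*Real.pi/(n:ℝ)) = 2*(x.1 - x.2 k').1 := by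
    rw [hfs]; linarith
  have hB2 : x.1.2 - R * Real.sin ((2*((k.val:ℤ):ℝ)+2)*Real.pi/(n:ℝ)) = 2*(x.1 - x.2 k').2 := by
    rw [hss]; linarith
  exact core n hn R hR0 hR2 hRne (k.val : ℤ) x.1.1 x.1.2
    (x.1 - x.2 k).1 (x.1 - x.2 k).2 (x.1 - x.2 k').1 (x.1 - x.2 k').2
    (hnorm k) (hnorm k') hA1 hA2 hB1 hB2
end
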